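/- arXiv:1907.10666 — 6 statements merged into one kernel-verified Lean document; each statement's English description precedes it below -/
import Mathlib

section
/- Let E ⊆ ℤ^r satisfy property (B), and let α ∈ E. Suppose there exists an index i ∈ I such that F_J(E,α) = ∅ for every proper subset J ⊊ I containing i. Then α is an absolute maximal of E: F_J(E,α) = ∅ for every proper subset J ⊊ I with J ≠ ∅. -/
namespace Colength

/-- The fiber `F_J(E, α)`: elements of `E` agreeing with `α` on `J` and strictly
larger outside `J`. -/
def Fiber {ι : Type*} (E : Set (ι → ℤ)) (J : Finset ι) (α : ι → ℤ) : Set (ι → ℤ) :=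
  {β | β ∈ E ∧ (∀ j ∈ J, β j = α j) ∧ (∀ i ∉ J, α i < β i)}

/-- The closed fiber `F̄_i(E, α)`. -/
def ClFiber {ι : Type*} (E : Set (ι → ℤ)) (i : ι) (α : ι → ℤ) : Set (ι → ℤ) :=
  {β | β ∈ E ∧ β i = α i ∧ ∀ j, j ≠ i → α j ≤ β j}

/-- `α` is a maximal point of `E`: the fiber `F(E,α) = ⋃ᵢ F_{i}(E,α)` is empty. -/
def IsMaximalPt {ι : Type*} [DecidableEq ι] (E : Set (ι → ℤ)) (α : ι → ℤ) : Prop :=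
  α ∈ E ∧ ∀ i : ι, Fiber E {i} α = ∅

/-- `α` is a relative maximal of `E`. -/
def IsRelMax {ι : Type*} [DecidableEq ι] (E : Set (ι → ℤ)) (α : ι → ℤ) : Prop :=
  IsMaximalPt E α ∧ ∀ J : Finset ι, 2 ≤ J.card → Fiber E J α ≠ ∅

/-- `α` is an absolute maximal of `E`. -/
def IsAbsMax {ι : Type*} [Fintype ι] (E : Set (ι → ℤ)) (α : ι → ℤ) : Prop :=
  α ∈ E ∧ ∀ J : Finset ι, J ≠ ∅ → J ≠ Finset.univ → Fiber E J α = ∅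

/-- Property (A): closure under componentwise minimum. -/
def PropA {ι : Type*} (E : Set (ι → ℤ)) : Prop :=
  ∀ α ∈ E, ∀ β ∈ E, (fun i => min (α i) (β i)) ∈ E

/-- Property (B): the exchange property. -/
def PropB {ι : Type*} (E : Set (ι → ℤ)) : Prop :=
  ∀ α ∈ E, ∀ β ∈ E, α ≠ β → ∀ i, α i = β i →
    ∃ γ ∈ E, α i < γ i ∧ ∀ j, j ≠ i →
      min (α j) (β j) ≤ γ j ∧ (α j ≠ β j → γ j = min (α j) (β j))

/-- Property (C): `E` is bounded below and contains `c + ℕ^r` for some `c ∈ ℕ^r`. -/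
def PropC {ι : Type*} (E : Set (ι → ℤ)) : Prop :=
  (∃ a : ι → ℤ, ∀ β ∈ E, a ≤ β) ∧
  (∃ c : ι → ℤ, 0 ≤ c ∧ ∀ x : ι → ℤ, c ≤ x → x ∈ E)

/-- `c` is the conductor of `E`: the least element with `c + ℕ^r ⊆ E`. -/
def IsConductor {ι : Type*} (E : Set (ι → ℤ)) (c : ι → ℤ) : Prop :=
  (∀ x : ι → ℤ, c ≤ x → x ∈ E) ∧ ∀ γ : ι → ℤ, (∀ x : ι → ℤ, γ ≤ x → x ∈ E) → c ≤ γ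

/-- Projection to coordinates `{1,3}` (indices `0` and `2`) for `r = 3`. -/
def pr13 (x : Fin 3 → ℤ) : Fin 2 → ℤ := ![x 0, x 2]

/-- Projection to coordinates `{2,3}` (indices `1` and `2`) for `r = 3`. -/
def pr23 (x : Fin 3 → ℤ) : Fin 2 → ℤ := ![x 1, x 2]

end Colength

open Colength in
/-- criterion for absolute maximals (Lemma 4). -/
theorem absolute_maximal_criterion {r : ℕ} (E : Set (Fin r → ℤ))
    (hB : PropB E) (α : Fin r → ℤ) (hα : α ∈ E) (i : Fin r)
    (h : ∀ J : Finset (Fin r), i ∈ J → J ≠ Finset.univ → Fiber E J α = ∅) :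
    IsAbsMax E α := by
  classical
  refine ⟨hα, fun J hJne hJuniv => ?_⟩
  by_cases hiJ : i ∈ J
  · exact h J hiJ hJuniv
  · rw [Set.eq_empty_iff_forall_notMem]
    rintro β ⟨hβE, hβeq, hβgt⟩
    obtain ⟨j, hj⟩ := Finset.nonempty_iff_ne_empty.mpr hJne
    have hne : α ≠ β := by
      intro hαβ
      have := hβgt i hiJ
      rw [hαβ] at this; exact lt_irrefl _ this
    have hαj : α j = β j := (hβeq j hj).symm
    obtain ⟨γ, hγE, hγj, hγ⟩ := hB α hα β hβE hne j hαj
    have hge : ∀ k, α k ≤ γ k := by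
      intro k
      by_cases hkj : k = j
      · subst hkj; exact hγj.le
      · have h1 := (hγ k hkj).1
        by_cases hkJ : k ∈ J
        · calc α k = min (α k) (β k) := by rw [hβeq k hkJ, min_self]
            _ ≤ γ k := h1
        · exact le_trans (le_min le_rfl (hβgt k hkJ).le) h1
    set J' : Finset (Fin r) := Finset.univ.filter (fun k => γ k = α k) with hJ'
    have hiJ' : i ∈ J' := by
      have hgi : γ i = α i := by
        have h2 := (hγ i (by rintro rfl; exact hiJ hj)).2
        have hne' : α i ≠ β i := (hβgt i hiJ).ne
        rw [h2 hne', min_eq_left (hβgt i hiJ).le]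
      simp [hJ', hgi]
    have hJ'univ : J' ≠ Finset.univ := by
      intro hu
      have hjJ' : j ∈ J' := hu ▸ Finset.mem_univ j
      rw [hJ', Finset.mem_filter] at hjJ'
      exact absurd hjJ'.2 hγj.ne'
    have hempty := h J' hiJ' hJ'univ
    rw [Set.eq_empty_iff_forall_notMem] at hempty
    refine hempty γ ⟨hγE, fun k hk => (Finset.mem_filter.mp hk).2, fun k hk => ?_⟩
    have : γ k ≠ α k := by
      intro e; exact hk (Finset.mem_filter.mpr ⟨Finset.mem_univ k, e⟩)
    exact lt_of_le_of_ne (hge k) (Ne.symm this)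
end

section
/- Let E ⊆ ℤ³ satisfy properties (A), (B), (C), and let α ∈ E be an absolute maximal of E. Then at least one of the following holds: (i) there exist relative maximals β, θ ∈ E with β_1 = α_1, β_3 = α_3, θ_2 = α_2, θ_3 = α_3; (ii) there is a relative maximal β ∈ E with β_1 = α_1 and β_3 = α_3, and (α_2, α_3) is a maximal point of E_{{2,3}}; (ii') there is a relative maximal β ∈ E with β_2 = α_2 and β_3 = α_3, and (α_1, α_3) is a maximal point of E_{{1,3}}; or (iii) (α_1, α_3) is a maximal point of E_{{1,3}} and (α_2, α_3) is a maximal point of E_{{2,3}}. -/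
namespace Colength

private lemma fin3_cases {i u v : Fin 3} (hiu : i ≠ u) (hiv : i ≠ v) (huv : u ≠ v)
    (l : Fin 3) : l = i ∨ l = u ∨ l = v := by
  by_contra h
  push_neg at h
  obtain ⟨h1, h2, h3⟩ := h
  have e1 : i.val ≠ u.val := fun e => hiu (Fin.val_injective e)
  have e2 : i.val ≠ v.val := fun e => hiv (Fin.val_injective e)
  have e3 : u.val ≠ v.val := fun e => huv (Fin.val_injective e)
  have f1 : l.val ≠ i.val := fun e => h1 (Fin.val_injective e)
  have f2 : l.val ≠ u.val := fun e => h2 (Fin.val_injective e)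
  have f3 : l.val ≠ v.val := fun e => h3 (Fin.val_injective e)
  have := l.isLt
  have := i.isLt
  have := u.isLt
  have := v.isLt
  omega

private lemma absmax_pair {E : Set (Fin 3 → ℤ)} {α : Fin 3 → ℤ} (hα : IsAbsMax E α)
    {p q r : Fin 3} (hpq : p ≠ q) (hpr : p ≠ r) (hqr : q ≠ r)
    {β : Fin 3 → ℤ} (hβ : β ∈ E) (h1 : β p = α p) (h2 : β q = α q) (h3 : α r < β r) :
    False := by
  have hne : ({p, q} : Finset (Fin 3)) ≠ ∅ := by
    simp
  have hnu : ({p, q} : Finset (Fin 3)) ≠ Finset.univ := by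
    intro h
    have hr : r ∈ ({p, q} : Finset (Fin 3)) := h ▸ Finset.mem_univ r
    rcases Finset.mem_insert.mp hr with h' | h'
    · exact hpr h'.symm
    · exact hqr (Finset.mem_singleton.mp h').symm
  have hemp := hα.2 _ hne hnu
  have hmem : β ∈ Fiber E {p, q} α := by
    refine ⟨hβ, ?_, ?_⟩
    · intro m hm
      rcases Finset.mem_insert.mp hm with rfl | h'
      · exact h1
      · rw [Finset.mem_singleton.mp h']; exact h2
    · intro m hm
      have hmp : m ≠ p := fun e => hm (by rw [e]; exact Finset.mem_insert_self p {q})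
      have hmq : m ≠ q := fun e => hm (by rw [e]; exact Finset.mem_insert_of_mem (Finset.mem_singleton_self q))
      rcases fin3_cases hpq hpr hqr m with rfl | rfl | rfl
      · exact absurd rfl hmp
      · exact absurd rfl hmq
      · exact h3
  rw [hemp] at hmem
  exact absurd hmem (Set.notMem_empty β)

private lemma absmax_single {E : Set (Fin 3 → ℤ)} {α : Fin 3 → ℤ} (hα : IsAbsMax E α)
    {p q r : Fin 3} (hpq : p ≠ q) (hpr : p ≠ r) (hqr : q ≠ r)
    {β : Fin 3 → ℤ} (hβ : β ∈ E) (h1 : β p = α p) (h2 : α q < β q) (h3 : α r < β r) :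
    False := by
  have hne : ({p} : Finset (Fin 3)) ≠ ∅ := by simp
  have hnu : ({p} : Finset (Fin 3)) ≠ Finset.univ := by
    intro h
    have hr : q ∈ ({p} : Finset (Fin 3)) := h ▸ Finset.mem_univ q
    exact hpq (Finset.mem_singleton.mp hr).symm
  have hemp := hα.2 _ hne hnu
  have hmem : β ∈ Fiber E {p} α := by
    refine ⟨hβ, ?_, ?_⟩
    · intro m hm
      rw [Finset.mem_singleton.mp hm]; exact h1
    · intro m hm
      have hmp : m ≠ p := fun e => hm (by rw [e]; exact Finset.mem_singleton_self p)
      rcases fin3_cases hpq hpr hqr m with rfl | rfl | rfl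
      · exact absurd rfl hmp
      · exact h2
      · exact h3
  rw [hemp] at hmem
  exact absurd hmem (Set.notMem_empty β)

private lemma ltT {E : Set (Fin 3 → ℤ)} {α : Fin 3 → ℤ} (hα : IsAbsMax E α)
    {i u v : Fin 3} (hiu : i ≠ u) (hiv : i ≠ v) (huv : u ≠ v)
    {β : Fin 3 → ℤ} (hβ : β ∈ E) (h1 : β u = α u) (h2 : α v < β v) : β i < α i := by
  rcases lt_trichotomy (β i) (α i) with h | h | h
  · exact h
  · exact (absmax_pair hα hiu hiv huv hβ h h1 h2).elim
  · exact (absmax_single hα (Ne.symm hiu) huv hiv hβ h1 h h2).elim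

private lemma mem_update {E : Set (Fin 3 → ℤ)} (hA : PropA E) {α β : Fin 3 → ℤ}
    (hαE : α ∈ E) (hβ : β ∈ E) {i u v : Fin 3}
    (hiu : i ≠ u) (hiv : i ≠ v) (huv : u ≠ v)
    (hu : α u ≤ β u) (hv : α v ≤ β v) (hi : β i ≤ α i) :
    Function.update α i (β i) ∈ E := by
  have hm := hA β hβ α hαE
  have heq : (fun l => min (β l) (α l)) = Function.update α i (β i) := by
    funext l
    rcases fin3_cases hiu hiv huv l with rfl | rfl | rfl
    · rw [Function.update_self]; exact min_eq_left hi
    · rw [Function.update_of_ne (Ne.symm hiu)]; exact min_eq_right hu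
    · rw [Function.update_of_ne (Ne.symm hiv)]; exact min_eq_right hv
  rwa [heq] at hm

private lemma noT_above {E : Set (Fin 3 → ℤ)} (hA : PropA E) (hB : PropB E)
    {α : Fin 3 → ℤ} (hα : IsAbsMax E α)
    {i u v : Fin 3} (hiu : i ≠ u) (hiv : i ≠ v) (huv : u ≠ v) (t : ℤ)
    (hW : ∀ m : ℤ, t < m → m < α i → Function.update α i m ∈ E →
      ∃ w ∈ E, w i = m ∧ α u < w u ∧ α v < w v) :
    ∀ β ∈ E, β u = α u → α v < β v → β i ≤ t := by
  suffices H : ∀ n : ℕ, ∀ β ∈ E, β u = α u → α v < β v → t < β i →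
      (α i - β i).toNat = n → False by
    intro β hβ h1 h2
    by_contra hc
    push_neg at hc
    exact H _ β hβ h1 h2 hc rfl
  intro n
  induction n using Nat.strong_induction_on with
  | _ n ih =>
    intro β hβ hu1 hv1 ht hn
    have hβi : β i < α i := ltT hα hiu hiv huv hβ hu1 hv1
    have hupd : Function.update α i (β i) ∈ E :=
      mem_update hA hα.1 hβ hiu hiv huv (le_of_eq hu1.symm) (le_of_lt hv1) (le_of_lt hβi)
    obtain ⟨w, hwE, hwi, hwu, hwv⟩ := hW (β i) ht hβi hupd
    have hne : β ≠ w := by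
      intro h
      rw [h] at hu1
      exact (ne_of_gt hwu) hu1
    obtain ⟨γ, hγE, hγi, hγ⟩ := hB β hβ w hwE hne i hwi.symm
    have hγu : γ u = α u := by
      have h2 := (hγ u (Ne.symm hiu)).2 (by rw [hu1]; exact ne_of_lt hwu)
      rw [h2, hu1]
      exact min_eq_left (le_of_lt hwu)
    have hγv : α v < γ v := lt_of_lt_of_le (lt_min hv1 hwv) (hγ v (Ne.symm hiv)).1
    have hγlt : γ i < α i := ltT hα hiu hiv huv hγE hγu hγv
    exact ih (α i - γ i).toNat (by omega) γ hγE hγu hγv (ht.trans hγi) rfl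

end Colength

namespace Colength

private lemma key (E : Set (Fin 3 → ℤ)) (hA : PropA E) (hB : PropB E)
    (i u v : Fin 3) (hiu : i ≠ u) (hiv : i ≠ v) (huv : u ≠ v)
    (α : Fin 3 → ℤ) (hα : IsAbsMax E α)
    (δ : Fin 3 → ℤ) (hδE : δ ∈ E) (hδu : δ u = α u) (hδv : α v < δ v) :
    ∃ θ : Fin 3 → ℤ, IsRelMax E θ ∧ θ u = α u ∧ θ v = α v := by
  classical
  have hαE := hα.1
  -- the largest `i`-th coordinate of a point of `E` agreeing with `α` at `u`
  -- and strictly bigger at `v`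
  have hbdd : ∃ b : ℤ, ∀ z : ℤ,
      (∃ β, β ∈ E ∧ β u = α u ∧ α v < β v ∧ β i = z) → z ≤ b := by
    refine ⟨α i, ?_⟩
    rintro z ⟨β, hβ, h1, h2, rfl⟩
    exact le_of_lt (ltT hα hiu hiv huv hβ h1 h2)
  obtain ⟨s, hsP, hsmax⟩ :=
    Int.exists_greatest_of_bdd hbdd ⟨δ i, δ, hδE, hδu, hδv, rfl⟩
  obtain ⟨eh, hehE, hehu, hehv, hehi⟩ := hsP
  -- the set G of good levels
  have hsG : s < α i ∧ Function.update α i s ∈ E ∧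
      ¬∃ w, w ∈ E ∧ w i = s ∧ α u < w u ∧ α v < w v := by
    have hsi : s < α i := by
      rw [← hehi]; exact ltT hα hiu hiv huv hehE hehu hehv
    refine ⟨hsi, ?_, ?_⟩
    · rw [← hehi]
      exact mem_update hA hαE hehE hiu hiv huv (le_of_eq hehu.symm) (le_of_lt hehv)
        (le_of_lt (by rw [hehi]; exact hsi))
    · rintro ⟨w, hwE, hwi, hwu, hwv⟩
      have hne : eh ≠ w := by
        intro h
        rw [h] at hehu
        exact (ne_of_gt hwu) hehu
      obtain ⟨γ, hγE, hγi, hγ⟩ := hB eh hehE w hwE hne i (by rw [hehi, hwi])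
      have hγu : γ u = α u := by
        have h2 := (hγ u (Ne.symm hiu)).2 (by rw [hehu]; exact ne_of_lt hwu)
        rw [h2, hehu]
        exact min_eq_left (le_of_lt hwu)
      have hγv : α v < γ v := lt_of_lt_of_le (lt_min hehv hwv) (hγ v (Ne.symm hiv)).1
      have hle := hsmax (γ i) ⟨γ, hγE, hγu, hγv, rfl⟩
      rw [hehi] at hγi
      omega
  have hGbdd : ∃ b : ℤ, ∀ z : ℤ,
      (z < α i ∧ Function.update α i z ∈ E ∧
        ¬∃ w, w ∈ E ∧ w i = z ∧ α u < w u ∧ α v < w v) → z ≤ b :=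
    ⟨α i, fun z hz => le_of_lt hz.1⟩
  obtain ⟨t, htG, htmax⟩ := Int.exists_greatest_of_bdd hGbdd ⟨s, hsG⟩
  obtain ⟨hti, htE, htW⟩ := htG
  set θ : Fin 3 → ℤ := Function.update α i t with hθdef
  have hθi : θ i = t := by rw [hθdef]; exact Function.update_self i t α
  have hθu : θ u = α u := by rw [hθdef]; exact Function.update_of_ne (Ne.symm hiu) t α
  have hθv : θ v = α v := by rw [hθdef]; exact Function.update_of_ne (Ne.symm hiv) t α
  have hθE : θ ∈ E := htE
  have hW : ∀ m : ℤ, t < m → m < α i → Function.update α i m ∈ E →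
      ∃ w ∈ E, w i = m ∧ α u < w u ∧ α v < w v := by
    intro m h1 h2 h3
    by_contra hc
    have := htmax m ⟨h2, h3, hc⟩
    omega
  have hnoTu : ∀ β ∈ E, β u = α u → α v < β v → β i ≤ t :=
    noT_above hA hB hα hiu hiv huv t hW
  have hW' : ∀ m : ℤ, t < m → m < α i → Function.update α i m ∈ E →
      ∃ w ∈ E, w i = m ∧ α v < w v ∧ α u < w u := by
    intro m h1 h2 h3
    obtain ⟨w, h4, h5, h6, h7⟩ := hW m h1 h2 h3
    exact ⟨w, h4, h5, h7, h6⟩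
  have hnoTv : ∀ β ∈ E, β v = α v → α u < β u → β i ≤ t :=
    noT_above hA hB hα hiv hiu (Ne.symm huv) t hW'
  -- θ is a maximal point
  have hmax : IsMaximalPt E θ := by
    refine ⟨hθE, fun l => ?_⟩
    rw [Set.eq_empty_iff_forall_notMem]
    rintro β ⟨hβE, heq, hgt⟩
    have heql : β l = θ l := heq l (Finset.mem_singleton_self l)
    rcases fin3_cases hiu hiv huv l with rfl | rfl | rfl
    · have h1 : θ u < β u := hgt u (by rw [Finset.mem_singleton]; exact Ne.symm hiu)
      have h2 : θ v < β v := hgt v (by rw [Finset.mem_singleton]; exact Ne.symm hiv)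
      rw [hθu] at h1
      rw [hθv] at h2
      exact htW ⟨β, hβE, by rw [heql, hθi], h1, h2⟩
    · have h2 : θ v < β v := hgt v (by rw [Finset.mem_singleton]; exact Ne.symm huv)
      have h1 : θ i < β i := hgt i (by rw [Finset.mem_singleton]; exact hiu)
      rw [hθv] at h2
      rw [hθi] at h1
      have := hnoTu β hβE (by rw [heql, hθu]) h2
      omega
    · have h2 : θ u < β u := hgt u (by rw [Finset.mem_singleton]; exact huv)
      have h1 : θ i < β i := hgt i (by rw [Finset.mem_singleton]; exact hiv)
      rw [hθu] at h2
      rw [hθi] at h1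
      have := hnoTv β hβE (by rw [heql, hθv]) h2
      omega
  -- fiber witnesses
  have hwuv : α ∈ Fiber E ({u, v} : Finset (Fin 3)) θ := by
    refine ⟨hαE, ?_, ?_⟩
    · intro m hm
      rcases Finset.mem_insert.mp hm with rfl | h'
      · exact hθu.symm
      · rw [Finset.mem_singleton.mp h']; exact hθv.symm
    · intro m hm
      have hmu : m ≠ u := fun e => hm (by rw [e]; exact Finset.mem_insert_self u {v})
      have hmv : m ≠ v := fun e => hm (by rw [e]; exact Finset.mem_insert_of_mem (Finset.mem_singleton_self v))
      rcases fin3_cases hiu hiv huv m with rfl | rfl | rfl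
      · rw [hθi]; exact hti
      · exact absurd rfl hmu
      · exact absurd rfl hmv
  have hθne : θ ≠ α := by
    intro h
    have := congrFun h i
    rw [hθi] at this
    omega
  obtain ⟨γ1, hγ1E, hγ1u, hγ1r⟩ := hB θ hθE α hαE hθne u hθu
  have hγ1i : γ1 i = t := by
    have h2 := (hγ1r i hiu).2 (by rw [hθi]; exact ne_of_lt hti)
    rw [h2, hθi]
    exact min_eq_left (le_of_lt hti)
  have hγ1v : γ1 v = α v := by
    have hge : α v ≤ γ1 v := by
      have h := (hγ1r v (Ne.symm huv)).1
      rw [hθv, min_self] at h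
      exact h
    rcases eq_or_lt_of_le hge with h | h
    · exact h.symm
    · exact absurd ⟨γ1, hγ1E, hγ1i, by rw [hθu] at hγ1u; exact hγ1u, h⟩ htW
  have hwiv : γ1 ∈ Fiber E ({i, v} : Finset (Fin 3)) θ := by
    refine ⟨hγ1E, ?_, ?_⟩
    · intro m hm
      rcases Finset.mem_insert.mp hm with rfl | h'
      · rw [hγ1i, hθi]
      · rw [Finset.mem_singleton.mp h', hγ1v, hθv]
    · intro m hm
      have hmi : m ≠ i := fun e => hm (by rw [e]; exact Finset.mem_insert_self i {v})
      have hmv : m ≠ v := fun e => hm (by rw [e]; exact Finset.mem_insert_of_mem (Finset.mem_singleton_self v))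
      rcases fin3_cases hiu hiv huv m with rfl | rfl | rfl
      · exact absurd rfl hmi
      · exact hγ1u
      · exact absurd rfl hmv
  obtain ⟨γ2, hγ2E, hγ2v, hγ2r⟩ := hB θ hθE α hαE hθne v hθv
  have hγ2i : γ2 i = t := by
    have h2 := (hγ2r i hiv).2 (by rw [hθi]; exact ne_of_lt hti)
    rw [h2, hθi]
    exact min_eq_left (le_of_lt hti)
  have hγ2u : γ2 u = α u := by
    have hge : α u ≤ γ2 u := by
      have h := (hγ2r u huv).1
      rw [hθu, min_self] at h
      exact h
    rcases eq_or_lt_of_le hge with h | h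
    · exact h.symm
    · exact absurd ⟨γ2, hγ2E, hγ2i, h, by rw [hθv] at hγ2v; exact hγ2v⟩ htW
  have hwiu : γ2 ∈ Fiber E ({i, u} : Finset (Fin 3)) θ := by
    refine ⟨hγ2E, ?_, ?_⟩
    · intro m hm
      rcases Finset.mem_insert.mp hm with rfl | h'
      · rw [hγ2i, hθi]
      · rw [Finset.mem_singleton.mp h', hγ2u, hθu]
    · intro m hm
      have hmi : m ≠ i := fun e => hm (by rw [e]; exact Finset.mem_insert_self i {u})
      have hmu : m ≠ u := fun e => hm (by rw [e]; exact Finset.mem_insert_of_mem (Finset.mem_singleton_self u))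
      rcases fin3_cases hiu hiv huv m with rfl | rfl | rfl
      · exact absurd rfl hmi
      · exact absurd rfl hmu
      · exact hγ2v
  have hwuniv : θ ∈ Fiber E (Finset.univ : Finset (Fin 3)) θ :=
    ⟨hθE, fun m _ => rfl, fun m hm => absurd (Finset.mem_univ m) hm⟩
  refine ⟨θ, ⟨hmax, ?_⟩, hθu, hθv⟩
  intro J hJ
  have hclass : J = Finset.univ ∨ J = {u, v} ∨ J = {i, v} ∨ J = {i, u} := by
    by_cases hi : i ∈ J
    · by_cases hu : u ∈ J
      · by_cases hv : v ∈ J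
        · left
          apply Finset.eq_univ_iff_forall.mpr
          intro m
          rcases fin3_cases hiu hiv huv m with h | h | h <;> rw [h] <;> assumption
        · right; right; right
          have hsub : J ⊆ {i, u} := by
            intro m hm
            rcases fin3_cases hiu hiv huv m with h | h | h
            · rw [h]; exact Finset.mem_insert_self i {u}
            · rw [h]; exact Finset.mem_insert_of_mem (Finset.mem_singleton_self u)
            · rw [h] at hm; exact absurd hm hv
          have hcard : ({i, u} : Finset (Fin 3)).card ≤ J.card := by
            rw [Finset.card_insert_of_notMem (by rw [Finset.mem_singleton]; exact hiu),
              Finset.card_singleton]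
            exact hJ
          exact Finset.eq_of_subset_of_card_le hsub hcard
      · right; right; left
        have hsub : J ⊆ {i, v} := by
          intro m hm
          rcases fin3_cases hiu hiv huv m with h | h | h
          · rw [h]; exact Finset.mem_insert_self i {v}
          · rw [h] at hm; exact absurd hm hu
          · rw [h]; exact Finset.mem_insert_of_mem (Finset.mem_singleton_self v)
        have hcard : ({i, v} : Finset (Fin 3)).card ≤ J.card := by
          rw [Finset.card_insert_of_notMem (by rw [Finset.mem_singleton]; exact hiv),
            Finset.card_singleton]
          exact hJ
        exact Finset.eq_of_subset_of_card_le hsub hcard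
    · right; left
      have hsub : J ⊆ {u, v} := by
        intro m hm
        rcases fin3_cases hiu hiv huv m with h | h | h
        · rw [h] at hm; exact absurd hm hi
        · rw [h]; exact Finset.mem_insert_self u {v}
        · rw [h]; exact Finset.mem_insert_of_mem (Finset.mem_singleton_self v)
      have hcard : ({u, v} : Finset (Fin 3)).card ≤ J.card := by
        rw [Finset.card_insert_of_notMem (by rw [Finset.mem_singleton]; exact huv),
          Finset.card_singleton]
        exact hJ
      exact Finset.eq_of_subset_of_card_le hsub hcard
  rcases hclass with rfl | rfl | rfl | rfl
  · exact Set.Nonempty.ne_empty ⟨θ, hwuniv⟩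
  · exact Set.Nonempty.ne_empty ⟨α, hwuv⟩
  · exact Set.Nonempty.ne_empty ⟨γ1, hwiv⟩
  · exact Set.Nonempty.ne_empty ⟨γ2, hwiu⟩

private lemma relmax_of_notQ {E : Set (Fin 3 → ℤ)} (hA : PropA E) (hB : PropB E)
    {α : Fin 3 → ℤ} (hα : IsAbsMax E α)
    (hQ : ¬ IsMaximalPt (pr23 '' E) (pr23 α)) :
    ∃ θ : Fin 3 → ℤ, IsRelMax E θ ∧ θ 1 = α 1 ∧ θ 2 = α 2 := by
  have hmem : pr23 α ∈ pr23 '' E := ⟨α, hα.1, rfl⟩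
  have hB' : ¬ ∀ l : Fin 2, Fiber (pr23 '' E) {l} (pr23 α) = ∅ := fun hb => hQ ⟨hmem, hb⟩
  push_neg at hB'
  obtain ⟨l, hl⟩ := hB'
  obtain ⟨y, hyE, hyeq, hygt⟩ := hl
  obtain ⟨x, hxE, rfl⟩ := hyE
  have hl01 : l = 0 ∨ l = 1 := by
    rcases l with ⟨lv, hlt⟩
    interval_cases lv
    · left; rfl
    · right; rfl
  rcases hl01 with rfl | rfl
  · have h1 : x 1 = α 1 := by
      have := hyeq 0 (Finset.mem_singleton_self 0)
      simpa [pr23] using this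
    have h2 : α 2 < x 2 := by
      have := hygt 1 (by rw [Finset.mem_singleton]; decide)
      simpa [pr23] using this
    exact key E hA hB 0 1 2 (by decide) (by decide) (by decide) α hα x hxE h1 h2
  · have h1 : x 2 = α 2 := by
      have := hyeq 1 (Finset.mem_singleton_self 1)
      simpa [pr23] using this
    have h2 : α 1 < x 1 := by
      have := hygt 0 (by rw [Finset.mem_singleton]; decide)
      simpa [pr23] using this
    obtain ⟨θ, hr, ha, hb⟩ :=
      key E hA hB 0 2 1 (by decide) (by decide) (by decide) α hα x hxE h1 h2
    exact ⟨θ, hr, hb, ha⟩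

private lemma relmax_of_notP {E : Set (Fin 3 → ℤ)} (hA : PropA E) (hB : PropB E)
    {α : Fin 3 → ℤ} (hα : IsAbsMax E α)
    (hP : ¬ IsMaximalPt (pr13 '' E) (pr13 α)) :
    ∃ β : Fin 3 → ℤ, IsRelMax E β ∧ β 0 = α 0 ∧ β 2 = α 2 := by
  have hmem : pr13 α ∈ pr13 '' E := ⟨α, hα.1, rfl⟩
  have hB' : ¬ ∀ l : Fin 2, Fiber (pr13 '' E) {l} (pr13 α) = ∅ := fun hb => hP ⟨hmem, hb⟩
  push_neg at hB'
  obtain ⟨l, hl⟩ := hB'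
  obtain ⟨y, hyE, hyeq, hygt⟩ := hl
  obtain ⟨x, hxE, rfl⟩ := hyE
  have hl01 : l = 0 ∨ l = 1 := by
    rcases l with ⟨lv, hlt⟩
    interval_cases lv
    · left; rfl
    · right; rfl
  rcases hl01 with rfl | rfl
  · have h1 : x 0 = α 0 := by
      have := hyeq 0 (Finset.mem_singleton_self 0)
      simpa [pr13] using this
    have h2 : α 2 < x 2 := by
      have := hygt 1 (by rw [Finset.mem_singleton]; decide)
      simpa [pr13] using this
    exact key E hA hB 1 0 2 (by decide) (by decide) (by decide) α hα x hxE h1 h2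
  · have h1 : x 2 = α 2 := by
      have := hyeq 1 (Finset.mem_singleton_self 1)
      simpa [pr13] using this
    have h2 : α 0 < x 0 := by
      have := hygt 0 (by rw [Finset.mem_singleton]; decide)
      simpa [pr13] using this
    obtain ⟨β, hr, ha, hb⟩ :=
      key E hA hB 1 2 0 (by decide) (by decide) (by decide) α hα x hxE h1 h2
    exact ⟨β, hr, hb, ha⟩

end Colength

open Colength in
/-- geometry of absolute maximals for `r = 3` (Lemma 11). -/
theorem absolute_maximal_geometry (E : Set (Fin 3 → ℤ))
    (hA : PropA E) (hB : PropB E) (hC : PropC E)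
    (α : Fin 3 → ℤ) (hα : IsAbsMax E α) :
    (∃ β θ : Fin 3 → ℤ, IsRelMax E β ∧ IsRelMax E θ ∧
        β 0 = α 0 ∧ β 2 = α 2 ∧ θ 1 = α 1 ∧ θ 2 = α 2) ∨
    (∃ β : Fin 3 → ℤ, IsRelMax E β ∧ β 0 = α 0 ∧ β 2 = α 2 ∧
        IsMaximalPt (pr23 '' E) (pr23 α)) ∨
    (∃ β : Fin 3 → ℤ, IsRelMax E β ∧ β 1 = α 1 ∧ β 2 = α 2 ∧
        IsMaximalPt (pr13 '' E) (pr13 α)) ∨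
    (IsMaximalPt (pr13 '' E) (pr13 α) ∧ IsMaximalPt (pr23 '' E) (pr23 α)) := by
  
  by_cases hP : IsMaximalPt (pr13 '' E) (pr13 α)
  · by_cases hQ : IsMaximalPt (pr23 '' E) (pr23 α)
    · exact Or.inr (Or.inr (Or.inr ⟨hP, hQ⟩))
    · obtain ⟨θ, hr, h1, h2⟩ := Colength.relmax_of_notQ hA hB hα hQ
      exact Or.inr (Or.inr (Or.inl ⟨θ, hr, h1, h2, hP⟩))
  · obtain ⟨β, hrβ, hb1, hb2⟩ := Colength.relmax_of_notP hA hB hα hP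
    by_cases hQ : IsMaximalPt (pr23 '' E) (pr23 α)
    · exact Or.inr (Or.inl ⟨β, hrβ, hb1, hb2, hQ⟩)
    · obtain ⟨θ, hrθ, h1, h2⟩ := Colength.relmax_of_notQ hA hB hα hQ
      exact Or.inl ⟨β, θ, hrβ, hrθ, hb1, hb2, h1, h2⟩
end

section
/- Let E ⊆ ℤ³ satisfy properties (A), (B), (C). If β and β′ are adjacent relative maximals of E with β_3 = β′_3, then max(β, β′) (componentwise maximum) is an absolute maximal of E. -/
open Colength

private lemma fin3_all (i : Fin 3) : i = 0 ∨ i = 1 ∨ i = 2 := by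
  fin_cases i <;> simp

private lemma noF0 {E : Set (Fin 3 → ℤ)} {α γ : Fin 3 → ℤ}
    (h : Fiber E {0} α = ∅) (hγ : γ ∈ E) (e : γ 0 = α 0)
    (l1 : α 1 < γ 1) (l2 : α 2 < γ 2) : False :=
  Set.eq_empty_iff_forall_notMem.mp h γ
    ⟨hγ, fun j hj => by
        have hj' : j = 0 := by simpa using hj
        subst hj'; exact e,
      fun j hj => by
        have hj' : j ≠ 0 := by simpa using hj
        rcases fin3_all j with h'|h'|h' <;> subst h'
        · exact absurd rfl hj'
        · exact l1
        · exact l2⟩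

private lemma noF1 {E : Set (Fin 3 → ℤ)} {α γ : Fin 3 → ℤ}
    (h : Fiber E {1} α = ∅) (hγ : γ ∈ E) (e : γ 1 = α 1)
    (l0 : α 0 < γ 0) (l2 : α 2 < γ 2) : False :=
  Set.eq_empty_iff_forall_notMem.mp h γ
    ⟨hγ, fun j hj => by
        have hj' : j = 1 := by simpa using hj
        subst hj'; exact e,
      fun j hj => by
        have hj' : j ≠ 1 := by simpa using hj
        rcases fin3_all j with h'|h'|h' <;> subst h'
        · exact l0
        · exact absurd rfl hj'
        · exact l2⟩

private lemma noF2 {E : Set (Fin 3 → ℤ)} {α γ : Fin 3 → ℤ}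
    (h : Fiber E {2} α = ∅) (hγ : γ ∈ E) (e : γ 2 = α 2)
    (l0 : α 0 < γ 0) (l1 : α 1 < γ 1) : False :=
  Set.eq_empty_iff_forall_notMem.mp h γ
    ⟨hγ, fun j hj => by
        have hj' : j = 2 := by simpa using hj
        subst hj'; exact e,
      fun j hj => by
        have hj' : j ≠ 2 := by simpa using hj
        rcases fin3_all j with h'|h'|h' <;> subst h'
        · exact l0
        · exact l1
        · exact absurd rfl hj'⟩

/-- Two points of `E` lying on the same horizontal level `t`, in columns `a0 < b0`,
both having something strictly above height `w` in their column at level `t`,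
contradict the emptiness of the `{0}`-fiber data on column `a0`. -/
private lemma no_parallel {E : Set (Fin 3 → ℤ)} (hB : PropB E) {a0 b0 w t : ℤ}
    (hab : a0 < b0)
    (hF : ∀ γ, γ ∈ E → γ 0 = a0 → w < γ 1 → t < γ 2 → False)
    {ζ ρ : Fin 3 → ℤ}
    (hζE : ζ ∈ E) (hζ0 : ζ 0 = a0) (hζ1 : w < ζ 1) (hζ2 : ζ 2 = t)
    (hρE : ρ ∈ E) (hρ0 : ρ 0 = b0) (hρ1 : w < ρ 1) (hρ2 : ρ 2 = t) : False := by
  have hne : ζ ≠ ρ := fun h => by have := congrFun h 0; omega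
  by_cases h11 : ζ 1 = ρ 1
  · obtain ⟨ξ, hξE, hξ1, hξ⟩ := hB ζ hζE ρ hρE hne 1 h11
    have h0 : ξ 0 = min (ζ 0) (ρ 0) := (hξ 0 (by decide)).2 (by omega)
    have hm0 : min (ζ 0) (ρ 0) = ζ 0 := min_eq_left (by omega)
    have h2 : min (ζ 2) (ρ 2) ≤ ξ 2 := (hξ 2 (by decide)).1
    have hm2 : min (ζ 2) (ρ 2) = ζ 2 := min_eq_left (by omega)
    rcases lt_or_eq_of_le (by omega : t ≤ ξ 2) with hlt | heq
    · exact hF ξ hξE (by omega) (by omega) hlt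
    · have hne2 : ξ ≠ ρ := fun h => by have := congrFun h 1; omega
      obtain ⟨ν, hνE, hν2, hν⟩ := hB ξ hξE ρ hρE hne2 2 (by omega)
      have n0 : ν 0 = min (ξ 0) (ρ 0) := (hν 0 (by decide)).2 (by omega)
      have nm0 : min (ξ 0) (ρ 0) = ξ 0 := min_eq_left (by omega)
      have n1 : ν 1 = min (ξ 1) (ρ 1) := (hν 1 (by decide)).2 (by omega)
      have nm1 : min (ξ 1) (ρ 1) = ρ 1 := min_eq_right (by omega)
      exact hF ν hνE (by omega) (by omega) (by omega)
  · obtain ⟨ξ, hξE, hξ2, hξ⟩ := hB ζ hζE ρ hρE hne 2 (by omega)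
    have h0 : ξ 0 = min (ζ 0) (ρ 0) := (hξ 0 (by decide)).2 (by omega)
    have hm0 : min (ζ 0) (ρ 0) = ζ 0 := min_eq_left (by omega)
    have hh1 : ξ 1 = min (ζ 1) (ρ 1) := (hξ 1 (by decide)).2 h11
    have hm1 : w < min (ζ 1) (ρ 1) := lt_min hζ1 hρ1
    exact hF ξ hξE (by omega) (by omega) (by omega)

private lemma enum2 : ∀ J : Finset (Fin 3), 2 ≤ J.card →
    J = {0,1} ∨ J = {0,2} ∨ J = {1,2} ∨ J = Finset.univ := by decide

private lemma enumP : ∀ J : Finset (Fin 3), J ≠ ∅ → J ≠ Finset.univ →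
    J = {0} ∨ J = {1} ∨ J = {2} ∨ J = {0,1} ∨ J = {0,2} ∨ J = {1,2} := by decide

open Colength in
/-- the componentwise maximum of two adjacent relative maximals with
the same third coordinate is an absolute maximal (Lemma 13). -/
theorem max_of_adjacent_relative_maximals (E : Set (Fin 3 → ℤ))
    (hA : PropA E) (hB : PropB E) (hC : PropC E)
    (β β' : Fin 3 → ℤ) (hβ : IsRelMax E β) (hβ' : IsRelMax E β')
    (h3 : β 2 = β' 2) (h1 : β 0 < β' 0)
    (hadj : ¬∃ θ : Fin 3 → ℤ, IsRelMax E θ ∧ θ 2 = β 2 ∧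
      β 0 < θ 0 ∧ θ 0 < β' 0 ∧ β' 1 < θ 1 ∧ θ 1 < β 1) :
    IsAbsMax E (fun i => max (β i) (β' i)) := by
  classical
  obtain ⟨⟨hβE, hβF⟩, hβR⟩ := hβ
  obtain ⟨⟨hβ'E, hβ'F⟩, hβ'R⟩ := hβ'
  -- Step 1 : β' 1 < β 1
  have hq'le : β' 1 ≤ β 1 := by
    by_contra hc
    push_neg at hc
    exact noF2 (hβF 2) hβ'E h3.symm h1 hc
  have hq : β' 1 < β 1 := by
    rcases lt_or_eq_of_le hq'le with h | h
    · exact h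
    · exfalso
      obtain ⟨ζ, hζE, hζag, hζlt⟩ :=
        Set.nonempty_iff_ne_empty.mpr (hβR {0,2} (by decide))
      obtain ⟨ρ'', hρE, hρag, hρlt⟩ :=
        Set.nonempty_iff_ne_empty.mpr (hβ'R {0,2} (by decide))
      refine no_parallel hB h1 (fun γ hγ e0 l1 l2 => noF0 (hβF 0) hγ e0 l1 l2)
        hζE (hζag 0 (by decide)) (hζlt 1 (by decide)) (hζag 2 (by decide))
        hρE (hρag 0 (by decide)) ?_ ?_
      · have := hρlt 1 (by decide); omega
      · have := hρag 2 (by decide); omega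
  have hd0 : max (β 0) (β' 0) = β' 0 := max_eq_right h1.le
  have hd1 : max (β 1) (β' 1) = β 1 := max_eq_left hq.le
  have hd2 : max (β 2) (β' 2) = β 2 := max_eq_left h3.ge
  -- Step 2 : (β' 0, β 1, β 2) ∈ E
  have hδE : (fun i => max (β i) (β' i)) ∈ E := by
    by_contra hδ
    -- greatest x with (x, β 1, β 2) ∈ E and β 0 < x
    have hPne : ∃ z : ℤ, ∃ γ, γ ∈ E ∧ γ 0 = z ∧ γ 1 = β 1 ∧ γ 2 = β 2 ∧ β 0 < z := by
      obtain ⟨σ₀, hE, hag, hlt⟩ :=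
        Set.nonempty_iff_ne_empty.mpr (hβR {1,2} (by decide))
      exact ⟨σ₀ 0, σ₀, hE, rfl, hag 1 (by decide), hag 2 (by decide), hlt 0 (by decide)⟩
    have hxub : ∀ z : ℤ, (∃ γ, γ ∈ E ∧ γ 0 = z ∧ γ 1 = β 1 ∧ γ 2 = β 2 ∧ β 0 < z) →
        z ≤ β' 0 := by
      rintro z ⟨γ, hγE, e0, e1, e2, hz⟩
      by_contra hzb
      push_neg at hzb
      exact noF2 (hβ'F 2) hγE (by omega) (by omega) (by omega)
    obtain ⟨xs, hPxs, hxmax⟩ := Int.exists_greatest_of_bdd ⟨β' 0, hxub⟩ hPne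
    obtain ⟨σ, hσE, hσ0, hσ1, hσ2, hpx⟩ := hPxs
    have hxlt : xs < β' 0 := by
      rcases lt_or_eq_of_le (hxub _ ⟨σ, hσE, hσ0, hσ1, hσ2, hpx⟩) with h | h
      · exact h
      · exfalso
        apply hδ
        have he : (fun i => max (β i) (β' i)) = σ := by
          funext i
          rcases fin3_all i with hi|hi|hi <;> subst hi
          · show max (β 0) (β' 0) = σ 0; omega
          · show max (β 1) (β' 1) = σ 1; omega
          · show max (β 2) (β' 2) = σ 2; omega
        exact Set.mem_of_eq_of_mem he hσE
    have hxm : ∀ γ, γ ∈ E → γ 1 = β 1 → γ 2 = β 2 → β 0 < γ 0 → γ 0 ≤ xs :=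
      fun γ hE e1 e2 h0 => hxmax (γ 0) ⟨γ, hE, rfl, e1, e2, h0⟩
    -- nothing strictly above σ within its column (at level β 2 raised)
    have hσ01 : ∀ g, g ∈ E → g 0 = xs → g 1 = β 1 → β 2 < g 2 → False := by
      intro g hg e0 e1 l2
      obtain ⟨ξ, hξE, hξ1, hξ⟩ :=
        hB σ hσE g hg (fun h => by have := congrFun h 2; omega) 1 (by omega)
      have h0 := (hξ 0 (by decide)).1
      have hmm : min (σ 0) (g 0) = xs := by rw [hσ0, e0, min_self]
      have h2 : ξ 2 = min (σ 2) (g 2) := (hξ 2 (by decide)).2 (by omega)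
      have hm2 : min (σ 2) (g 2) = β 2 := by rw [hσ2]; exact min_eq_left (by omega)
      exact noF2 (hβF 2) hξE (by omega) (by omega) (by omega)
    -- greatest height v₁ strictly east of xs at level β 2
    have hQub : ∀ z : ℤ, (∃ γ, γ ∈ E ∧ xs < γ 0 ∧ γ 1 = z ∧ γ 2 = β 2) →
        z ≤ β 1 - 1 := by
      rintro z ⟨γ, hE, h0, e1, e2⟩
      by_contra hc
      push_neg at hc
      rcases lt_or_eq_of_le (by omega : β 1 ≤ γ 1) with h | h
      · exact noF2 (hβF 2) hE e2 (by omega) h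
      · exact absurd (hxm γ hE h.symm e2 (by omega)) (by omega)
    obtain ⟨v₁, hQv, hvmax⟩ := Int.exists_greatest_of_bdd ⟨β 1 - 1, hQub⟩
      ⟨β' 1, β', hβ'E, by omega, rfl, h3.symm⟩
    obtain ⟨κ₀, hκ₀E, hκ₀0, hκ₀1, hκ₀2⟩ := hQv
    have hvq : v₁ < β 1 := by
      have := hQub v₁ ⟨κ₀, hκ₀E, hκ₀0, hκ₀1, hκ₀2⟩; omega
    have hvge : β' 1 ≤ v₁ := hvmax (β' 1) ⟨β', hβ'E, by omega, rfl, h3.symm⟩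
    have hEH : ∀ γ, γ ∈ E → xs < γ 0 → γ 2 = β 2 → γ 1 ≤ v₁ :=
      fun γ hE h0 e2 => hvmax (γ 1) ⟨γ, hE, h0, rfl, e2⟩
    -- column xs above level β 2 has nothing of height > v₁
    have hCol : ∀ g, g ∈ E → g 0 = xs → v₁ < g 1 → β 2 < g 2 → False := by
      intro g hg e0 l1 l2
      by_cases h : g 1 = β 1
      · exact hσ01 g hg e0 h l2
      · obtain ⟨ξ, hξE, hξ0, hξ⟩ :=
          hB σ hσE g hg (fun hh => by have := congrFun hh 2; omega) 0 (by omega)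
        have hh1 : ξ 1 = min (σ 1) (g 1) := (hξ 1 (by decide)).2 (by omega)
        have h2 : ξ 2 = min (σ 2) (g 2) := (hξ 2 (by decide)).2 (by omega)
        have hm2 : min (σ 2) (g 2) = β 2 := by rw [hσ2]; exact min_eq_left (by omega)
        have hm1 : v₁ < min (σ 1) (g 1) := lt_min (by omega) l1
        exact absurd (hEH ξ hξE (by omega) (by omega)) (by omega)
    rcases lt_or_eq_of_le hvge with hvgt | hveq
    · -- v₁ > β' 1 : build the relative maximal (xs, v₁, β 2) and contradict adjacency
      have hRub : ∀ z : ℤ, (∃ γ, γ ∈ E ∧ γ 0 = z ∧ γ 1 = v₁ ∧ γ 2 = β 2 ∧ xs < z) →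
          z ≤ β' 0 := by
        rintro z ⟨γ, hE, e0, e1, e2, hz⟩
        by_contra hc
        push_neg at hc
        exact noF2 (hβ'F 2) hE (by omega) (by omega) (by omega)
      obtain ⟨x₁, hRx, hx₁max⟩ := Int.exists_greatest_of_bdd ⟨β' 0, hRub⟩
        ⟨κ₀ 0, κ₀, hκ₀E, rfl, hκ₀1, hκ₀2, hκ₀0⟩
      obtain ⟨κ, hκE, hκ0, hκ1, hκ2, hxx⟩ := hRx
      have hκ01 : ∀ g, g ∈ E → g 0 = x₁ → g 1 = v₁ → β 2 < g 2 → False := by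
        intro g hg e0 e1 l2
        obtain ⟨ξ, hξE, hξ1, hξ⟩ :=
          hB κ hκE g hg (fun hh => by have := congrFun hh 2; omega) 1 (by omega)
        have h0 := (hξ 0 (by decide)).1
        have hm0 : min (κ 0) (g 0) = x₁ := by rw [hκ0, e0, min_self]
        have h2 : ξ 2 = min (κ 2) (g 2) := (hξ 2 (by decide)).2 (by omega)
        have hm2 : min (κ 2) (g 2) = β 2 := by rw [hκ2]; exact min_eq_left (by omega)
        exact absurd (hEH ξ hξE (by omega) (by omega)) (by omega)
      have hNE1 : ∀ g, g ∈ E → xs < g 0 → g 1 = v₁ → β 2 < g 2 → False := by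
        intro g hg h0 e1 l2
        by_cases h : g 0 = x₁
        · exact hκ01 g hg h e1 l2
        · obtain ⟨ξ, hξE, hξ1, hξ⟩ :=
            hB κ hκE g hg (fun hh => by have := congrFun hh 0; omega) 1 (by omega)
          have hh0 : ξ 0 = min (κ 0) (g 0) := (hξ 0 (by decide)).2 (by omega)
          have hm0 : xs < min (κ 0) (g 0) := lt_min (by omega) h0
          have h2 : ξ 2 = min (κ 2) (g 2) := (hξ 2 (by decide)).2 (by omega)
          have hm2 : min (κ 2) (g 2) = β 2 := by rw [hκ2]; exact min_eq_left (by omega)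
          exact absurd (hEH ξ hξE (by omega) (by omega)) (by omega)
      have hmE := hA σ hσE κ hκE
      set m : Fin 3 → ℤ := fun i => min (σ i) (κ i) with hm
      have hm0 : m 0 = xs := by
        rw [hm]; show min (σ 0) (κ 0) = xs
        rw [hσ0, hκ0]; exact min_eq_left (by omega)
      have hm1 : m 1 = v₁ := by
        rw [hm]; show min (σ 1) (κ 1) = v₁
        rw [hσ1, hκ1]; exact min_eq_right (by omega)
      have hm2 : m 2 = β 2 := by
        rw [hm]; show min (σ 2) (κ 2) = β 2
        rw [hσ2, hκ2]; exact min_self _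
      have hmRel : IsRelMax E m := by
        refine ⟨⟨hmE, ?_⟩, ?_⟩
        · intro i
          rcases fin3_all i with hi|hi|hi <;> subst hi
          · refine Set.eq_empty_iff_forall_notMem.mpr (fun γ hγ => ?_)
            obtain ⟨hE, hag, hlt⟩ := hγ
            have e0 : γ 0 = m 0 := hag 0 (by decide)
            have l1 : m 1 < γ 1 := hlt 1 (by decide)
            have l2 : m 2 < γ 2 := hlt 2 (by decide)
            exact hCol γ hE (by omega) (by omega) (by omega)
          · refine Set.eq_empty_iff_forall_notMem.mpr (fun γ hγ => ?_)
            obtain ⟨hE, hag, hlt⟩ := hγ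
            have e1 : γ 1 = m 1 := hag 1 (by decide)
            have l0 : m 0 < γ 0 := hlt 0 (by decide)
            have l2 : m 2 < γ 2 := hlt 2 (by decide)
            exact hNE1 γ hE (by omega) (by omega) (by omega)
          · refine Set.eq_empty_iff_forall_notMem.mpr (fun γ hγ => ?_)
            obtain ⟨hE, hag, hlt⟩ := hγ
            have e2 : γ 2 = m 2 := hag 2 (by decide)
            have l0 : m 0 < γ 0 := hlt 0 (by decide)
            have l1 : m 1 < γ 1 := hlt 1 (by decide)
            exact absurd (hEH γ hE (by omega) (by omega)) (by omega)
        · intro J hJ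
          rcases enum2 J hJ with hJ'|hJ'|hJ'|hJ' <;> subst hJ'
          · -- {0,1}
            obtain ⟨ξ, hξE, hξ2, hξ⟩ :=
              hB m hmE σ hσE (fun hh => by have := congrFun hh 1; omega) 2 (by omega)
            have h0 := (hξ 0 (by decide)).1
            have hmm0 : min (m 0) (σ 0) = xs := by rw [hm0, hσ0, min_self]
            have hh1 : ξ 1 = min (m 1) (σ 1) := (hξ 1 (by decide)).2 (by omega)
            have hmm1 : min (m 1) (σ 1) = v₁ := by
              rw [hm1, hσ1]; exact min_eq_left (by omega)
            rcases lt_or_eq_of_le (by omega : xs ≤ ξ 0) with hl | he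
            · exact absurd (hNE1 ξ hξE hl (by omega) (by omega)) not_false
            · apply Set.nonempty_iff_ne_empty.mp
              refine ⟨ξ, hξE, ?_, ?_⟩
              · intro j hj
                rcases (by decide :
                    ∀ j : Fin 3, j ∈ ({0,1} : Finset (Fin 3)) → j = 0 ∨ j = 1) j hj
                  with h|h <;> subst h <;> omega
              · intro j hj
                have hj2 : j = 2 := by
                  revert hj; rcases fin3_all j with h|h|h <;> subst h <;> decide
                subst hj2; omega
          · -- {0,2} contains σ
            apply Set.nonempty_iff_ne_empty.mp
            refine ⟨σ, hσE, ?_, ?_⟩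
            · intro j hj
              rcases (by decide :
                  ∀ j : Fin 3, j ∈ ({0,2} : Finset (Fin 3)) → j = 0 ∨ j = 2) j hj
                with h|h <;> subst h <;> omega
            · intro j hj
              have hj1 : j = 1 := by
                revert hj; rcases fin3_all j with h|h|h <;> subst h <;> decide
              subst hj1; omega
          · -- {1,2} contains κ
            apply Set.nonempty_iff_ne_empty.mp
            refine ⟨κ, hκE, ?_, ?_⟩
            · intro j hj
              rcases (by decide :
                  ∀ j : Fin 3, j ∈ ({1,2} : Finset (Fin 3)) → j = 1 ∨ j = 2) j hj
                with h|h <;> subst h <;> omega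
            · intro j hj
              have hj0 : j = 0 := by
                revert hj; rcases fin3_all j with h|h|h <;> subst h <;> decide
              subst hj0; omega
          · -- univ contains m
            apply Set.nonempty_iff_ne_empty.mp
            exact ⟨m, hmE, fun j _ => rfl, fun j hj => absurd (Finset.mem_univ j) hj⟩
      exact hadj ⟨m, hmRel, hm2, by omega, by omega, by omega, by omega⟩
    · -- v₁ = β' 1 : contradiction via no_parallel on columns xs and β' 0
      obtain ⟨ρ'', hρ''E, hρag, hρlt⟩ :=
        Set.nonempty_iff_ne_empty.mpr (hβ'R {0,2} (by decide))
      refine no_parallel hB hxlt hCol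
        hσE hσ0 (by omega) hσ2
        hρ''E (hρag 0 (by decide)) ?_ ?_
      · have := hρlt 1 (by decide); omega
      · have := hρag 2 (by decide); omega
  -- Step 3 : all proper fibers of the max are empty
  refine ⟨hδE, ?_⟩
  intro J hne hnu
  rcases enumP J hne hnu with hJ|hJ|hJ|hJ|hJ|hJ <;> subst hJ <;>
    refine Set.eq_empty_iff_forall_notMem.mpr (fun γ hγ => ?_) <;>
    obtain ⟨hE, hag, hlt⟩ := hγ
  · have e0 : γ 0 = max (β 0) (β' 0) := hag 0 (by decide)
    have l1 : max (β 1) (β' 1) < γ 1 := hlt 1 (by decide)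
    have l2 : max (β 2) (β' 2) < γ 2 := hlt 2 (by decide)
    rw [hd0] at e0; rw [hd1] at l1; rw [hd2] at l2
    exact noF0 (hβ'F 0) hE e0 (by omega) (by omega)
  · have e1 : γ 1 = max (β 1) (β' 1) := hag 1 (by decide)
    have l0 : max (β 0) (β' 0) < γ 0 := hlt 0 (by decide)
    have l2 : max (β 2) (β' 2) < γ 2 := hlt 2 (by decide)
    rw [hd1] at e1; rw [hd0] at l0; rw [hd2] at l2
    exact noF1 (hβF 1) hE e1 (by omega) (by omega)
  · have e2 : γ 2 = max (β 2) (β' 2) := hag 2 (by decide)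
    have l0 : max (β 0) (β' 0) < γ 0 := hlt 0 (by decide)
    have l1 : max (β 1) (β' 1) < γ 1 := hlt 1 (by decide)
    rw [hd2] at e2; rw [hd0] at l0; rw [hd1] at l1
    exact noF2 (hβF 2) hE e2 (by omega) (by omega)
  · have e0 : γ 0 = max (β 0) (β' 0) := hag 0 (by decide)
    have e1 : γ 1 = max (β 1) (β' 1) := hag 1 (by decide)
    have l2 : max (β 2) (β' 2) < γ 2 := hlt 2 (by decide)
    rw [hd0] at e0; rw [hd1] at e1; rw [hd2] at l2
    exact noF1 (hβF 1) hE e1 (by omega) (by omega)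
  · have e0 : γ 0 = max (β 0) (β' 0) := hag 0 (by decide)
    have e2 : γ 2 = max (β 2) (β' 2) := hag 2 (by decide)
    have l1 : max (β 1) (β' 1) < γ 1 := hlt 1 (by decide)
    rw [hd0] at e0; rw [hd2] at e2; rw [hd1] at l1
    exact noF2 (hβF 2) hE e2 (by omega) (by omega)
  · have e1 : γ 1 = max (β 1) (β' 1) := hag 1 (by decide)
    have e2 : γ 2 = max (β 2) (β' 2) := hag 2 (by decide)
    have l0 : max (β 0) (β' 0) < γ 0 := hlt 0 (by decide)
    rw [hd1] at e1; rw [hd2] at e2; rw [hd0] at l0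
    exact noF2 (hβ'F 2) hE (by omega) (by omega) (by omega)
end

section
/- Let R be a complete admissible local ring with r minimal primes and I a regular fractional ideal of R with value set E ⊆ ℤ^r. For any nonempty J ⊆ {1,…,r}, the value set E_J of the projected ideal π_J(I) equals the projection pr_J(E) of E. -/
open Polynomial in
lemma aux_inv_mem_range {A K : Type*} [CommRing A] [Field K] [Algebra A K] {z : K} (hz : z ≠ 0)
    (hmem : z ∈ (algebraMap A K).range) (hint : IsIntegral A z⁻¹) :
    z⁻¹ ∈ (algebraMap A K).range := by
  obtain ⟨p, pmonic, hp⟩ := hint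
  set f := algebraMap A K with hf
  set n := p.natDegree with hn
  have hev : ∑ i ∈ Finset.range (n + 1), f (p.coeff i) * (z⁻¹) ^ i = 0 := by
    have := hp
    rwa [Polynomial.eval₂_eq_sum_range] at this
  have key : ∑ i ∈ Finset.range (n + 1), f (p.coeff i) * z ^ (n - i) = 0 := by
    have h2 := congrArg (· * z ^ n) hev
    simp only [Finset.sum_mul, zero_mul] at h2
    rw [← h2]
    refine Finset.sum_congr rfl fun i hi => ?_
    rw [Finset.mem_range, Nat.lt_succ_iff] at hi
    rw [mul_assoc, pow_sub₀ z hz hi, inv_pow, mul_comm (z ^ n)]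
  rw [Finset.sum_range_succ, Nat.sub_self, pow_zero, mul_one,
    pmonic.coeff_natDegree, map_one] at key
  set S : K := ∑ i ∈ Finset.range n, f (p.coeff i) * z ^ (n - 1 - i) with hS
  have hzS : z * (-S) = 1 := by
    have hsum : ∑ i ∈ Finset.range n, f (p.coeff i) * z ^ (n - i) = z * S := by
      rw [hS, Finset.mul_sum]
      refine Finset.sum_congr rfl fun i hi => ?_
      rw [Finset.mem_range] at hi
      have : n - i = (n - 1 - i) + 1 := by omega
      rw [this, pow_succ]
      ring
    rw [mul_neg, ← hsum]
    linear_combination -key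
  have hSmem : S ∈ (algebraMap A K).range := by
    refine Subring.sum_mem _ fun i _ => ?_
    exact Subring.mul_mem _ ⟨p.coeff i, rfl⟩ (Subring.pow_mem _ hmem _)
  rw [inv_eq_of_mul_eq_one_right hzS]
  exact Subring.neg_mem _ hSmem

section Vaux
variable {K : Type*} [Field K] (v : K → ℤ)
  (hvmul : ∀ x y : K, x ≠ 0 → y ≠ 0 → v (x * y) = v x + v y)

include hvmul

lemma vaux_one : v 1 = 0 := by
  have := hvmul 1 1 one_ne_zero one_ne_zero
  rw [mul_one] at this; omega

lemma vaux_neg {x : K} (hx : x ≠ 0) : v (-x) = v x := by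
  have h1 : v (-1 : K) = 0 := by
    have := hvmul (-1) (-1) (by norm_num) (by norm_num)
    rw [neg_mul_neg, one_mul, vaux_one v hvmul] at this; omega
  have := hvmul (-1) x (by norm_num) hx
  rw [neg_one_mul] at this; omega

lemma vaux_pow {x : K} (hx : x ≠ 0) : ∀ n : ℕ, v (x ^ n) = n * v x := by
  intro n
  induction n with
  | zero => simpa using vaux_one v hvmul
  | succ k ih =>
    rw [pow_succ, hvmul _ _ (pow_ne_zero _ hx) hx, ih]
    push_cast; ring

lemma vaux_add_eq_left
    (hvadd : ∀ x y : K, x ≠ 0 → y ≠ 0 → x + y ≠ 0 → min (v x) (v y) ≤ v (x + y))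
    {x y : K} (hx : x ≠ 0) (hy : y ≠ 0) (hlt : v x < v y) :
    x + y ≠ 0 ∧ v (x + y) = v x := by
  have hne : x + y ≠ 0 := by
    intro h
    have hyx : y = -x := by linear_combination h
    rw [hyx, vaux_neg v hvmul hx] at hlt
    omega
  refine ⟨hne, le_antisymm ?_ ?_⟩
  · have h2 := hvadd (x + y) (-y) hne (neg_ne_zero.mpr hy) (by simpa using hx)
    rw [add_neg_cancel_right, vaux_neg v hvmul hy] at h2
    omega
  · have h1 := hvadd x y hx hy hne
    omega

end Vaux

set_option maxHeartbeats 1000000 in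
/-- Lemma 1: for a complete admissible local ring `R` with `r`
minimal primes `℘ i` and a regular fractional ideal `I` with value set `E`, the
value set `E_J` of the projected ideal equals the projection `pr_J(E)`.

Here `K = FractionRing R` is the total ring of fractions, `π i : K → K_i` the
projection to the total ring of fractions of `R/℘ i`, and `v i` the discrete
valuation of `K_i` associated to the DVR `integralClosure (R/℘ i) K_i`. -/
theorem value_set_of_projection_eq_projection_of_value_set
    {r : ℕ} (R : Type) [CommRing R] [IsLocalRing R] [IsNoetherianRing R]
    [IsReduced R]
    [IsAdicComplete (IsLocalRing.maximalIdeal R) R]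
    (hdim : ringKrullDim R = 1)
    (hres : (r : Cardinal) ≤ Cardinal.mk (IsLocalRing.ResidueField R))
    (℘ : Fin r → Ideal R) (hinj : Function.Injective ℘)
    (hrange : Set.range ℘ = minimalPrimes R)
    (π : ∀ i : Fin r, FractionRing R →+* FractionRing (R ⧸ ℘ i))
    (hπ : ∀ (i : Fin r) (x : R),
      π i (algebraMap R (FractionRing R) x)
        = algebraMap (R ⧸ ℘ i) (FractionRing (R ⧸ ℘ i)) (Ideal.Quotient.mk (℘ i) x))
    (v : ∀ i : Fin r, FractionRing (R ⧸ ℘ i) → ℤ)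
    (hvmul : ∀ (i : Fin r) (x y : FractionRing (R ⧸ ℘ i)), x ≠ 0 → y ≠ 0 →
      v i (x * y) = v i x + v i y)
    (hvadd : ∀ (i : Fin r) (x y : FractionRing (R ⧸ ℘ i)), x ≠ 0 → y ≠ 0 →
      x + y ≠ 0 → min (v i x) (v i y) ≤ v i (x + y))
    (hvdvr : ∀ (i : Fin r) (x : FractionRing (R ⧸ ℘ i)),
      x ∈ integralClosure (R ⧸ ℘ i) (FractionRing (R ⧸ ℘ i)) ↔ x = 0 ∨ 0 ≤ v i x)
    (hvsurj : ∀ i : Fin r, Function.Surjective (v i))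
    (I : Submodule R (FractionRing R))
    (hIreg : ∃ x ∈ I, ∃ u ∈ nonZeroDivisors R, x = algebraMap R (FractionRing R) u)
    (hIfrac : ∃ d ∈ nonZeroDivisors R, ∀ x ∈ I,
      ∃ a : R, d • x = algebraMap R (FractionRing R) a)
    (J : Finset (Fin r)) (hJ : J ≠ ∅) :
    {β : {x // x ∈ J} → ℤ | ∃ h ∈ I, (∀ j : {x // x ∈ J}, π j.1 h ≠ 0) ∧
        ∀ j : {x // x ∈ J}, β j = v j.1 (π j.1 h)}
      = (fun (β : Fin r → ℤ) (j : {x // x ∈ J}) => β j.1) ''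
          {β : Fin r → ℤ | ∃ h ∈ I, (∀ i : Fin r, π i h ≠ 0) ∧
            ∀ i : Fin r, β i = v i (π i h)} := by
  classical
  obtain ⟨j0, hj0⟩ := Finset.nonempty_iff_ne_empty.mpr hJ
  have hmin : ∀ i, ℘ i ∈ minimalPrimes R := fun i => hrange ▸ Set.mem_range_self i
  have hp : ∀ i, (℘ i).IsPrime := fun i => (hmin i).1.1
  have hmle : ∀ (i) (Q : Ideal R), Q.IsPrime → Q ≤ ℘ i → Q = ℘ i := fun i Q hQ hle =>
    le_antisymm hle ((hmin i).2 ⟨hQ, bot_le⟩ hle)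
  -- the maximal ideal is not contained in any minimal prime
  have hmaxne : ∀ i, ¬ (IsLocalRing.maximalIdeal R ≤ ℘ i) := by
    intro i hle
    have heq : ℘ i = IsLocalRing.maximalIdeal R :=
      le_antisymm (IsLocalRing.le_maximalIdeal (hp i).ne_top) hle
    have huniq : ∀ Q : Ideal R, Q.IsPrime → Q = ℘ i := fun Q hQ =>
      hmle i Q hQ (heq ▸ IsLocalRing.le_maximalIdeal hQ.ne_top)
    have hsub2 : Subsingleton (PrimeSpectrum R) :=
      ⟨fun a b => PrimeSpectrum.ext ((huniq _ a.2).trans (huniq _ b.2).symm)⟩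
    have hle0 : ringKrullDim R ≤ 0 := Order.krullDim_nonpos_of_subsingleton
    rw [hdim] at hle0
    norm_num at hle0
  -- choose m in the maximal ideal avoiding all minimal primes
  obtain ⟨m, hmmax, hmnot⟩ : ∃ m ∈ IsLocalRing.maximalIdeal R, ∀ i, m ∉ ℘ i := by
    by_contra hcon
    push_neg at hcon
    have hsub : (IsLocalRing.maximalIdeal R : Set R)
        ⊆ ⋃ i ∈ ((Finset.univ : Finset (Fin r)) : Set (Fin r)), (℘ i : Set R) := by
      intro a ha
      obtain ⟨i, hi⟩ := hcon a ha
      exact Set.mem_biUnion (Finset.mem_coe.mpr (Finset.mem_univ i)) hi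
    obtain ⟨i, _, hle⟩ := (Ideal.subset_union_prime j0 j0 (fun i _ _ _ => hp i)).mp hsub
    exact hmaxne i hle
  -- intersection of the minimal primes is zero
  have hbotinf : sInf (Set.range ℘) = (⊥ : Ideal R) := by
    rw [hrange]
    have h1 : sInf (minimalPrimes R) = (⊥ : Ideal R).radical := Ideal.sInf_minimalPrimes
    have h2 : nilradical R = 0 := nilradical_eq_zero R
    rw [h1]
    exact h2
  -- a regular element avoids all minimal primes
  obtain ⟨x0, hx0I, u, hu, hx0⟩ := hIreg
  have hunot : ∀ i, u ∉ ℘ i := by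
    intro i hui
    have hninf : ¬ ((Finset.univ.erase i).inf ℘ ≤ ℘ i) := by
      intro hle
      obtain ⟨j, hj, hle'⟩ := (hp i).inf_le'.mp hle
      exact (Finset.mem_erase.mp hj).1 (hinj (hmle i (℘ j) (hp j) hle'))
    obtain ⟨z, hzinf, hznot⟩ := SetLike.not_le_iff_exists.mp hninf
    have hzall : u * z ∈ sInf (Set.range ℘) := by
      rw [Ideal.mem_sInf]
      rintro _ ⟨j, rfl⟩
      by_cases hji : j = i
      · subst hji; exact Ideal.mul_mem_right _ _ hui
      · exact Ideal.mul_mem_left _ _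
          (Finset.inf_le (f := ℘) (Finset.mem_erase.mpr ⟨hji, Finset.mem_univ j⟩) hzinf)
    rw [hbotinf] at hzall
    have hz0 : z = 0 := by
      have := (mul_right_mem_nonZeroDivisors_eq_zero_iff hu).mp (by rwa [mul_comm] at hzall)
      exact this
    exact hznot (hz0 ▸ (℘ i).zero_mem)
  -- packaged valuation facts
  have hv1 : ∀ i, v i 1 = 0 := by
    intro i; haveI := hp i
    exact vaux_one (v i) (hvmul i)
  have hvpow : ∀ (i) (x : FractionRing (R ⧸ ℘ i)), x ≠ 0 → ∀ n : ℕ, v i (x ^ n) = n * v i x := by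
    intro i x hx n; haveI := hp i
    exact vaux_pow (v i) (hvmul i) hx n
  have hvaddl : ∀ (i) (x y : FractionRing (R ⧸ ℘ i)), x ≠ 0 → y ≠ 0 → v i x < v i y →
      x + y ≠ 0 ∧ v i (x + y) = v i x := by
    intro i x y hx hy hlt; haveI := hp i
    exact vaux_add_eq_left (v i) (hvmul i) (hvadd i) hx hy hlt
  -- images of elements of R outside ℘ i are nonzero with nonnegative valuation
  have hamk0 : ∀ (i) (a : R), a ∉ ℘ i →
      algebraMap (R ⧸ ℘ i) (FractionRing (R ⧸ ℘ i)) (Ideal.Quotient.mk (℘ i) a) ≠ 0 := by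
    intro i a ha; haveI := hp i
    intro h0
    exact ha (Ideal.Quotient.eq_zero_iff_mem.mp (IsFractionRing.to_map_eq_zero_iff.mp h0))
  have hvge0 : ∀ (i) (a : R ⧸ ℘ i), a ≠ 0 →
      0 ≤ v i (algebraMap (R ⧸ ℘ i) (FractionRing (R ⧸ ℘ i)) a) := by
    intro i a ha; haveI := hp i
    have h0 : algebraMap (R ⧸ ℘ i) (FractionRing (R ⧸ ℘ i)) a ≠ 0 := by
      intro h0; exact ha (IsFractionRing.to_map_eq_zero_iff.mp h0)
    rcases (hvdvr i _).mp (Subalgebra.algebraMap_mem _ a) with h | h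
    · exact absurd h h0
    · exact h
  -- the image of m has positive valuation
  have hvm1 : ∀ i, 1 ≤ v i (algebraMap (R ⧸ ℘ i) (FractionRing (R ⧸ ℘ i))
      (Ideal.Quotient.mk (℘ i) m)) := by
    intro i; haveI := hp i
    set w := Ideal.Quotient.mk (℘ i) m with hw
    set z := algebraMap (R ⧸ ℘ i) (FractionRing (R ⧸ ℘ i)) w with hz
    have hwne : w ≠ 0 := by
      rw [hw, Ne, Ideal.Quotient.eq_zero_iff_mem]; exact hmnot i
    have hzne : z ≠ 0 := hamk0 i m (hmnot i)
    have hzge : 0 ≤ v i z := hvge0 i w hwne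
    by_contra hlt
    have hz0 : v i z = 0 := by omega
    have hzine : z⁻¹ ≠ 0 := inv_ne_zero hzne
    have hvzi : v i z⁻¹ = 0 := by
      have := hvmul i z z⁻¹ hzne hzine
      rw [mul_inv_cancel₀ hzne, hv1 i] at this
      omega
    have hint : IsIntegral (R ⧸ ℘ i) z⁻¹ :=
      (mem_integralClosure_iff _ _).mp ((hvdvr i z⁻¹).mpr (Or.inr (le_of_eq hvzi.symm)))
    obtain ⟨t, ht⟩ := aux_inv_mem_range hzne ⟨w, rfl⟩ hint
    have hwt : w * t = 1 := by
      apply IsFractionRing.injective (R ⧸ ℘ i) (FractionRing (R ⧸ ℘ i))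
      rw [map_mul, map_one, ht, mul_inv_cancel₀ hzne]
    obtain ⟨s, rfl⟩ := Ideal.Quotient.mk_surjective t
    have hms : Ideal.Quotient.mk (℘ i) (m * s) = Ideal.Quotient.mk (℘ i) 1 := by
      rw [map_mul, map_one]; exact hwt
    have hsubmem : m * s - 1 ∈ ℘ i := by
      have := Ideal.Quotient.eq.mp hms
      exact this
    have h1mem : (1 : R) ∈ IsLocalRing.maximalIdeal R := by
      have hms' : m * s ∈ IsLocalRing.maximalIdeal R := Ideal.mul_mem_right _ _ hmmax
      have hd : m * s - 1 ∈ IsLocalRing.maximalIdeal R :=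
        IsLocalRing.le_maximalIdeal (hp i).ne_top hsubmem
      have : (1 : R) = m * s - (m * s - 1) := by ring
      rw [this]; exact Ideal.sub_mem _ hms' hd
    exact (IsLocalRing.maximalIdeal.isMaximal R).ne_top ((Ideal.eq_top_iff_one _).mpr h1mem)
  -- residue representatives
  obtain ⟨e⟩ : Nonempty (Fin r ↪ IsLocalRing.ResidueField R) := by
    refine (Cardinal.le_def _ _).mp ?_
    rwa [Cardinal.mk_fin]
  have hcex : ∀ k : Fin r, ∃ c : R, Ideal.Quotient.mk (IsLocalRing.maximalIdeal R) c = e k :=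
    fun k => Ideal.Quotient.mk_surjective (e k)
  choose c hc using hcex
  have hcdiff : ∀ k k' : Fin r, c k - c k' ∈ IsLocalRing.maximalIdeal R → k = k' := by
    intro k k' hmem
    apply e.injective
    rw [← hc k, ← hc k']
    have : Ideal.Quotient.mk (IsLocalRing.maximalIdeal R) (c k - c k') = 0 :=
      Ideal.Quotient.eq_zero_iff_mem.mpr hmem
    rw [map_sub, sub_eq_zero] at this
    exact this
  -- the set equality
  ext β
  simp only [Set.mem_setOf_eq, Set.mem_image]
  constructor
  · rintro ⟨h, hhI, hhne, hhval⟩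
    rw [hx0] at hx0I
    -- choose the exponent N
    obtain ⟨N, hN0, hN⟩ : ∃ N : ℕ, 0 < N ∧ ∀ j ∈ J,
        v j (π j h) - v j (π j (algebraMap R (FractionRing R) u)) < (N : ℤ) := by
      refine ⟨J.sup (fun j => (v j (π j h)
        - v j (π j (algebraMap R (FractionRing R) u))).toNat + 1), ?_, ?_⟩
      · have h1 := Finset.le_sup (f := fun j => (v j (π j h)
          - v j (π j (algebraMap R (FractionRing R) u))).toNat + 1) hj0
        omega
      · intro j hj
        have h1 := Finset.le_sup (f := fun j => (v j (π j h)
          - v j (π j (algebraMap R (FractionRing R) u))).toNat + 1) hj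
        have h2 := Int.self_le_toNat (v j (π j h) - v j (π j (algebraMap R (FractionRing R) u)))
        omega
    -- the candidates
    set g : Fin r → FractionRing R :=
      fun k => h + (c k * m ^ N) • algebraMap R (FractionRing R) u with hgdef
    have hgI : ∀ k, g k ∈ I := fun k => I.add_mem hhI (I.smul_mem _ hx0I)
    have hπg : ∀ (i) (k), π i (g k) = π i h
        + algebraMap (R ⧸ ℘ i) (FractionRing (R ⧸ ℘ i))
          (Ideal.Quotient.mk (℘ i) (c k * m ^ N * u)) := by
      intro i k
      rw [hgdef]
      simp only
      rw [map_add, Algebra.smul_def, ← map_mul, hπ]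
    -- at most one candidate dies at each index outside J
    have hkey : ∀ i, ∀ k k' : Fin r, π i (g k) = 0 → π i (g k') = 0 → k = k' := by
      intro i k k' hk hk'
      haveI := hp i
      have hsub : algebraMap (R ⧸ ℘ i) (FractionRing (R ⧸ ℘ i))
          (Ideal.Quotient.mk (℘ i) ((c k - c k') * (m ^ N * u))) = 0 := by
        have : π i (g k) - π i (g k') = 0 := by rw [hk, hk', sub_zero]
        rw [hπg, hπg] at this
        have h2 : ((c k - c k') * (m ^ N * u)) = (c k * m ^ N * u) - (c k' * m ^ N * u) := by ring
        rw [h2, map_sub, map_sub]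
        linear_combination this
      have hmem : (c k - c k') * (m ^ N * u) ∈ ℘ i :=
        Ideal.Quotient.eq_zero_iff_mem.mp (IsFractionRing.to_map_eq_zero_iff.mp hsub)
      rcases (hp i).mem_or_mem hmem with hmem1 | hmem2
      · exact hcdiff k k' (IsLocalRing.le_maximalIdeal (hp i).ne_top hmem1)
      · exfalso
        rcases (hp i).mem_or_mem hmem2 with hm1 | hu1
        · exact hmnot i (((hp i).pow_mem_iff_mem N hN0).mp hm1)
        · exact hunot i hu1
    -- find a good candidate
    obtain ⟨k, hkgood⟩ : ∃ k : Fin r, ∀ i, i ∉ J → π i (g k) ≠ 0 := by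
      set Bad : Finset (Fin r) := Finset.univ.filter (fun k => ∃ i, i ∉ J ∧ π i (g k) = 0)
        with hBad
      have hwit : ∀ k ∈ Bad, ∃ i, i ∉ J ∧ π i (g k) = 0 := by
        intro k hk
        exact (Finset.mem_filter.mp hk).2
      by_contra hall
      push_neg at hall
      have hallBad : ∀ k, k ∈ Bad := by
        intro k
        obtain ⟨i, hi, hzero⟩ := hall k
        exact Finset.mem_filter.mpr ⟨Finset.mem_univ k, ⟨i, hi, hzero⟩⟩
      set f : Fin r → Fin r := fun k =>
        if hk : ∃ i, i ∉ J ∧ π i (g k) = 0 then hk.choose else k with hfdef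
      have hff : ∀ k, f k ∉ J ∧ π (f k) (g k) = 0 := by
        intro k
        have hk : ∃ i, i ∉ J ∧ π i (g k) = 0 := (Finset.mem_filter.mp (hallBad k)).2
        have hfk : f k = hk.choose := by rw [hfdef]; exact dif_pos hk
        rw [hfk]
        exact hk.choose_spec
      have hfmaps : ∀ k ∈ Finset.univ, f k ∈ Jᶜ := fun k _ =>
        Finset.mem_compl.mpr (hff k).1
      have hfinj : Set.InjOn f ↑(Finset.univ : Finset (Fin r)) := by
        intro k _ k' _ hfeq
        exact hkey (f k) k k' (hff k).2 (hfeq ▸ (hff k').2)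
      have hcard := Finset.card_le_card_of_injOn f hfmaps hfinj
      rw [Finset.card_univ, Finset.card_compl, Fintype.card_fin] at hcard
      have hJcard : 0 < J.card := Finset.card_pos.mpr ⟨j0, hj0⟩
      have hJle : J.card ≤ r := by
        have := Finset.card_le_card (Finset.subset_univ J)
        rwa [Finset.card_univ, Fintype.card_fin] at this
      omega
    -- the good candidate keeps the values on J
    have hjfact : ∀ j ∈ J, π j (g k) ≠ 0 ∧ v j (π j (g k)) = v j (π j h) := by
      intro j hj
      haveI := hp j
      have hne : π j h ≠ 0 := hhne ⟨j, hj⟩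
      by_cases hb : Ideal.Quotient.mk (℘ j) (c k * m ^ N * u) = 0
      · rw [hπg j k, hb, map_zero, add_zero]
        exact ⟨hne, rfl⟩
      · set A := algebraMap (R ⧸ ℘ j) (FractionRing (R ⧸ ℘ j))
          (Ideal.Quotient.mk (℘ j) (c k)) with hA
        set B := algebraMap (R ⧸ ℘ j) (FractionRing (R ⧸ ℘ j))
          (Ideal.Quotient.mk (℘ j) m) with hB
        set C := algebraMap (R ⧸ ℘ j) (FractionRing (R ⧸ ℘ j))
          (Ideal.Quotient.mk (℘ j) u) with hC
        have hsplit : algebraMap (R ⧸ ℘ j) (FractionRing (R ⧸ ℘ j))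
            (Ideal.Quotient.mk (℘ j) (c k * m ^ N * u)) = A * B ^ N * C := by
          rw [hA, hB, hC]
          simp only [map_mul, map_pow]
        have hbne : algebraMap (R ⧸ ℘ j) (FractionRing (R ⧸ ℘ j))
            (Ideal.Quotient.mk (℘ j) (c k * m ^ N * u)) ≠ 0 := fun h0 =>
          hb (IsFractionRing.to_map_eq_zero_iff.mp h0)
        have hck : Ideal.Quotient.mk (℘ j) (c k) ≠ 0 := by
          intro h0
          apply hb
          rw [map_mul, map_mul, h0, zero_mul, zero_mul]
        have hAne : A ≠ 0 := fun h0 => hck (IsFractionRing.to_map_eq_zero_iff.mp h0)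
        have hBne : B ≠ 0 := hamk0 j m (hmnot j)
        have hCne : C ≠ 0 := hamk0 j u (hunot j)
        have hvA : 0 ≤ v j A := hvge0 j _ hck
        have hvB : 1 ≤ v j B := hvm1 j
        have hval : v j (A * B ^ N * C) = v j A + N * v j B + v j C := by
          rw [hvmul j (A * B ^ N) C (mul_ne_zero hAne (pow_ne_zero _ hBne)) hCne,
            hvmul j A (B ^ N) hAne (pow_ne_zero _ hBne), hvpow j B hBne N]
        have hCval : π j (algebraMap R (FractionRing R) u) = C := hπ j u
        have hNj := hN j hj
        rw [hCval] at hNj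
        have hNB : (N : ℤ) ≤ (N : ℤ) * v j B := le_mul_of_one_le_right (by positivity) hvB
        have hlt : v j (π j h) < v j (A * B ^ N * C) := by
          rw [hval]; omega
        obtain ⟨hne2, heq2⟩ := hvaddl j (π j h) (A * B ^ N * C) hne
          (mul_ne_zero (mul_ne_zero hAne (pow_ne_zero _ hBne)) hCne) hlt
        constructor
        · rw [hπg j k, hsplit]; exact hne2
        · rw [hπg j k, hsplit]; exact heq2
    refine ⟨fun i => v i (π i (g k)), ⟨g k, hgI k, ?_, fun i => rfl⟩, ?_⟩
    · intro i
      by_cases hi : i ∈ J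
      · exact (hjfact i hi).1
      · exact hkgood i hi
    · funext j
      show v j.1 (π j.1 (g k)) = β j
      rw [hhval j]
      exact (hjfact j.1 j.2).2

  · rintro ⟨β', ⟨h, hhI, hhne, hhval⟩, rfl⟩
    exact ⟨h, hhI, fun j => hhne j.1, fun j => hhval j.1⟩
end

section
/- Let E ⊆ ℤ³ satisfy properties (A), (B), (C) with conductor c(E), and fix z ∈ ℤ. Suppose z ∈ pr_3(RM(E)) and z is not the second coordinate of any maximal point of E_{{1,3}} nor of E_{{2,3}} (i.e., there is no maximal (x, z) ∈ M(E_{{1,3}}) and no maximal (y, z) ∈ M(E_{{2,3}})). If there are exactly s relative maximals of E with third coordinate z, then there are exactly s − 1 absolute maximals of E with third coordinate z. -/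
namespace L17
open Colength

def NF0 (E : Set (Fin 3 → ℤ)) (α : Fin 3 → ℤ) : Prop :=
  ∀ β ∈ E, β 0 = α 0 → α 1 < β 1 → α 2 < β 2 → False
def NF1 (E : Set (Fin 3 → ℤ)) (α : Fin 3 → ℤ) : Prop :=
  ∀ β ∈ E, β 1 = α 1 → α 0 < β 0 → α 2 < β 2 → False
def NF2 (E : Set (Fin 3 → ℤ)) (α : Fin 3 → ℤ) : Prop :=
  ∀ β ∈ E, β 2 = α 2 → α 0 < β 0 → α 1 < β 1 → False
def Mx (E : Set (Fin 3 → ℤ)) (α : Fin 3 → ℤ) : Prop :=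
  α ∈ E ∧ NF0 E α ∧ NF1 E α ∧ NF2 E α
def W01 (E : Set (Fin 3 → ℤ)) (α : Fin 3 → ℤ) : Prop :=
  ∃ β ∈ E, β 0 = α 0 ∧ β 1 = α 1 ∧ α 2 < β 2
def W02 (E : Set (Fin 3 → ℤ)) (α : Fin 3 → ℤ) : Prop :=
  ∃ β ∈ E, β 0 = α 0 ∧ α 1 < β 1 ∧ β 2 = α 2
def W12 (E : Set (Fin 3 → ℤ)) (α : Fin 3 → ℤ) : Prop :=
  ∃ β ∈ E, α 0 < β 0 ∧ β 1 = α 1 ∧ β 2 = α 2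

lemma trich : ∀ i : Fin 3, i = 0 ∨ i = 1 ∨ i = 2 := by decide

lemma ne_of_coord {α β : Fin 3 → ℤ} (i : Fin 3) (h : α i ≠ β i) : α ≠ β :=
  fun e => h (by rw [e])

lemma eq3 {α β : Fin 3 → ℤ} (h0 : α 0 = β 0) (h1 : α 1 = β 1) (h2 : α 2 = β 2) : α = β := by
  funext i; rcases trich i with rfl|rfl|rfl <;> assumption

variable {E : Set (Fin 3 → ℤ)} {α : Fin 3 → ℤ}

lemma fiber0 : Fiber E {0} α = ∅ ↔ NF0 E α := by
  rw [Set.eq_empty_iff_forall_notMem]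
  constructor
  · intro h β hβ h0 h1 h2
    refine h β ⟨hβ, ?_, ?_⟩
    · intro j hj; rw [Finset.mem_singleton] at hj; subst hj; exact h0
    · intro i hi; rcases trich i with rfl|rfl|rfl
      · exact absurd (Finset.mem_singleton_self _) hi
      · exact h1
      · exact h2
  · rintro h β ⟨hβ, hJ, hK⟩
    exact h β hβ (hJ 0 (by decide)) (hK 1 (by decide)) (hK 2 (by decide))

lemma fiber1 : Fiber E {1} α = ∅ ↔ NF1 E α := by
  rw [Set.eq_empty_iff_forall_notMem]
  constructor
  · intro h β hβ h1 h0 h2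
    refine h β ⟨hβ, ?_, ?_⟩
    · intro j hj; rw [Finset.mem_singleton] at hj; subst hj; exact h1
    · intro i hi; rcases trich i with rfl|rfl|rfl
      · exact h0
      · exact absurd (Finset.mem_singleton_self _) hi
      · exact h2
  · rintro h β ⟨hβ, hJ, hK⟩
    exact h β hβ (hJ 1 (by decide)) (hK 0 (by decide)) (hK 2 (by decide))

lemma fiber2 : Fiber E {2} α = ∅ ↔ NF2 E α := by
  rw [Set.eq_empty_iff_forall_notMem]
  constructor
  · intro h β hβ h2 h0 h1
    refine h β ⟨hβ, ?_, ?_⟩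
    · intro j hj; rw [Finset.mem_singleton] at hj; subst hj; exact h2
    · intro i hi; rcases trich i with rfl|rfl|rfl
      · exact h0
      · exact h1
      · exact absurd (Finset.mem_singleton_self _) hi
  · rintro h β ⟨hβ, hJ, hK⟩
    exact h β hβ (hJ 2 (by decide)) (hK 0 (by decide)) (hK 1 (by decide))

lemma fiber01 : Fiber E {0,1} α = ∅ ↔ ¬ W01 E α := by
  rw [Set.eq_empty_iff_forall_notMem]
  constructor
  · rintro h ⟨β, hβ, h0, h1, h2⟩
    refine h β ⟨hβ, ?_, ?_⟩
    · intro j hj; rcases trich j with rfl|rfl|rfl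
      · exact h0
      · exact h1
      · exact absurd hj (by decide)
    · intro i hi; rcases trich i with rfl|rfl|rfl
      · exact absurd (by decide) hi
      · exact absurd (by decide) hi
      · exact h2
  · rintro h β ⟨hβ, hJ, hK⟩
    exact h ⟨β, hβ, hJ 0 (by decide), hJ 1 (by decide), hK 2 (by decide)⟩

lemma fiber02 : Fiber E {0,2} α = ∅ ↔ ¬ W02 E α := by
  rw [Set.eq_empty_iff_forall_notMem]
  constructor
  · rintro h ⟨β, hβ, h0, h1, h2⟩
    refine h β ⟨hβ, ?_, ?_⟩
    · intro j hj; rcases trich j with rfl|rfl|rfl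
      · exact h0
      · exact absurd hj (by decide)
      · exact h2
    · intro i hi; rcases trich i with rfl|rfl|rfl
      · exact absurd (by decide) hi
      · exact h1
      · exact absurd (by decide) hi
  · rintro h β ⟨hβ, hJ, hK⟩
    exact h ⟨β, hβ, hJ 0 (by decide), hK 1 (by decide), hJ 2 (by decide)⟩

lemma fiber12 : Fiber E {1,2} α = ∅ ↔ ¬ W12 E α := by
  rw [Set.eq_empty_iff_forall_notMem]
  constructor
  · rintro h ⟨β, hβ, h0, h1, h2⟩
    refine h β ⟨hβ, ?_, ?_⟩
    · intro j hj; rcases trich j with rfl|rfl|rfl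
      · exact absurd hj (by decide)
      · exact h1
      · exact h2
    · intro i hi; rcases trich i with rfl|rfl|rfl
      · exact h0
      · exact absurd (by decide) hi
      · exact absurd (by decide) hi
  · rintro h β ⟨hβ, hJ, hK⟩
    exact h ⟨β, hβ, hK 0 (by decide), hJ 1 (by decide), hJ 2 (by decide)⟩

lemma fiber_univ (hα : α ∈ E) : (Fiber E Finset.univ α) ≠ ∅ := by
  intro he
  have : α ∈ Fiber E Finset.univ α := ⟨hα, fun j _ => rfl, fun i hi => absurd (Finset.mem_univ i) hi⟩
  rw [he] at this
  exact this

lemma isMax_iff : IsMaximalPt E α ↔ Mx E α := by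
  constructor
  · rintro ⟨hα, h⟩
    exact ⟨hα, fiber0.mp (h 0), fiber1.mp (h 1), fiber2.mp (h 2)⟩
  · rintro ⟨hα, h0, h1, h2⟩
    refine ⟨hα, fun i => ?_⟩
    rcases trich i with rfl|rfl|rfl
    · exact fiber0.mpr h0
    · exact fiber1.mpr h1
    · exact fiber2.mpr h2

lemma card2cases : ∀ J : Finset (Fin 3), 2 ≤ J.card →
    J = {0,1} ∨ J = {0,2} ∨ J = {1,2} ∨ J = Finset.univ := by decide

lemma propercases : ∀ J : Finset (Fin 3), J ≠ ∅ → J ≠ Finset.univ →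
    J = {0} ∨ J = {1} ∨ J = {2} ∨ J = {0,1} ∨ J = {0,2} ∨ J = {1,2} := by decide

lemma isRel_iff : IsRelMax E α ↔ Mx E α ∧ W01 E α ∧ W02 E α ∧ W12 E α := by
  constructor
  · rintro ⟨hm, h⟩
    refine ⟨isMax_iff.mp hm, ?_, ?_, ?_⟩
    · by_contra hw; exact h {0,1} (by decide) (fiber01.mpr hw)
    · by_contra hw; exact h {0,2} (by decide) (fiber02.mpr hw)
    · by_contra hw; exact h {1,2} (by decide) (fiber12.mpr hw)
  · rintro ⟨hm, h01, h02, h12⟩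
    refine ⟨isMax_iff.mpr hm, fun J hJ => ?_⟩
    rcases card2cases J hJ with rfl|rfl|rfl|rfl
    · exact fun he => (fiber01.mp he) h01
    · exact fun he => (fiber02.mp he) h02
    · exact fun he => (fiber12.mp he) h12
    · exact fiber_univ hm.1

lemma isAbs_iff : IsAbsMax E α ↔ Mx E α ∧ ¬W01 E α ∧ ¬W02 E α ∧ ¬W12 E α := by
  constructor
  · rintro ⟨hα, h⟩
    exact ⟨⟨hα, fiber0.mp (h {0} (by decide) (by decide)),
            fiber1.mp (h {1} (by decide) (by decide)),
            fiber2.mp (h {2} (by decide) (by decide))⟩,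
           fiber01.mp (h {0,1} (by decide) (by decide)),
           fiber02.mp (h {0,2} (by decide) (by decide)),
           fiber12.mp (h {1,2} (by decide) (by decide))⟩
  · rintro ⟨⟨hα, h0, h1, h2⟩, h01, h02, h12⟩
    refine ⟨hα, fun J hJ hJ' => ?_⟩
    rcases propercases J hJ hJ' with rfl|rfl|rfl|rfl|rfl|rfl
    · exact fiber0.mpr h0
    · exact fiber1.mpr h1
    · exact fiber2.mpr h2
    · exact fiber01.mpr h01
    · exact fiber02.mpr h02
    · exact fiber12.mpr h12

end L17

namespace L17
open Colength

variable {E : Set (Fin 3 → ℤ)} {z : ℤ} {α δ : Fin 3 → ℤ}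

/-- If `α` is maximal and has a witness to the right at the same level,
it has one above in the same column (at the same level). -/
lemma T1 (hB : PropB E) (hM : Mx E α) (h : W12 E α) : W02 E α := by
  obtain ⟨β, hβ, hb0, hb1, hb2⟩ := h
  obtain ⟨γ, hγ, hγ1, hj⟩ := hB α hM.1 β hβ (ne_of_coord 0 (by omega)) 1 hb1.symm
  have h0 : γ 0 = α 0 := by
    have h := (hj 0 (by decide)).2 (by omega)
    rw [h, min_eq_left hb0.le]
  have h2 : α 2 ≤ γ 2 := by
    have h := (hj 2 (by decide)).1
    rw [hb2, min_self] at h; exact h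
  rcases eq_or_lt_of_le h2 with he|hl
  · exact ⟨γ, hγ, h0, hγ1, he.symm⟩
  · exact (hM.2.1 γ hγ h0 hγ1 hl).elim

lemma T1' (hB : PropB E) (hM : Mx E α) (h : W02 E α) : W12 E α := by
  obtain ⟨β, hβ, hb0, hb1, hb2⟩ := h
  obtain ⟨γ, hγ, hγ0, hj⟩ := hB α hM.1 β hβ (ne_of_coord 1 (by omega)) 0 hb0.symm
  have h1 : γ 1 = α 1 := by
    have h := (hj 1 (by decide)).2 (by omega)
    rw [h, min_eq_left hb1.le]
  have h2 : α 2 ≤ γ 2 := by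
    have h := (hj 2 (by decide)).1
    rw [hb2, min_self] at h; exact h
  rcases eq_or_lt_of_le h2 with he|hl
  · exact ⟨γ, hγ, hγ0, h1, he.symm⟩
  · exact (hM.2.2.1 γ hγ h1 hγ0 hl).elim

lemma T2 (hB : PropB E) (h02 : W02 E α) (h12 : W12 E α) : W01 E α := by
  obtain ⟨u, hu, hu0, hu1, hu2⟩ := h02
  obtain ⟨v, hv, hv0, hv1, hv2⟩ := h12
  obtain ⟨γ, hγ, hγ2, hj⟩ := hB u hu v hv (ne_of_coord 0 (by omega)) 2 (by omega)
  have h0 : γ 0 = α 0 := by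
    have h := (hj 0 (by decide)).2 (by omega)
    rw [h, hu0, min_eq_left (by omega)]
  have h1 : γ 1 = α 1 := by
    have h := (hj 1 (by decide)).2 (by omega)
    rw [h, hv1, min_eq_right (by omega)]
  exact ⟨γ, hγ, h0, h1, by omega⟩

lemma T3 (hB : PropB E) (hM : Mx E α) (h01 : W01 E α) : W02 E α := by
  obtain ⟨v, hv, hv0, hv1, hv2⟩ := h01
  obtain ⟨γ, hγ, hγ1, hj⟩ := hB α hM.1 v hv (ne_of_coord 2 (by omega)) 1 hv1.symm
  have h0 : α 0 ≤ γ 0 := by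
    have h := (hj 0 (by decide)).1
    rw [hv0, min_self] at h; exact h
  have h2 : γ 2 = α 2 := by
    have h := (hj 2 (by decide)).2 (by omega)
    rw [h, min_eq_left hv2.le]
  rcases eq_or_lt_of_le h0 with he|hl
  · exact ⟨γ, hγ, he.symm, hγ1, h2⟩
  · exact (hM.2.2.2 γ hγ h2 hl hγ1).elim

lemma T3' (hB : PropB E) (hM : Mx E α) (h01 : W01 E α) : W12 E α := by
  obtain ⟨v, hv, hv0, hv1, hv2⟩ := h01
  obtain ⟨γ, hγ, hγ0, hj⟩ := hB α hM.1 v hv (ne_of_coord 2 (by omega)) 0 hv0.symm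
  have h1 : α 1 ≤ γ 1 := by
    have h := (hj 1 (by decide)).1
    rw [hv1, min_self] at h; exact h
  have h2 : γ 2 = α 2 := by
    have h := (hj 2 (by decide)).2 (by omega)
    rw [h, min_eq_left hv2.le]
  rcases eq_or_lt_of_le h1 with he|hl
  · exact ⟨γ, hγ, hγ0, he.symm, h2⟩
  · exact (hM.2.2.2 γ hγ h2 hγ0 hl).elim

/-- No point strictly above (in y and z) the column of a relative maximal. -/
lemma E1 (hB : PropB E) (hM : Mx E α) (h01 : W01 E α) :
    ∀ r ∈ E, r 0 = α 0 → α 1 < r 1 → α 2 < r 2 → False := by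
  intro r hr r0 r1 r2
  obtain ⟨v, hv, hv0, hv1, hv2⟩ := h01
  obtain ⟨γ, hγ, hγ0, hj⟩ := hB r hr v hv (ne_of_coord 1 (by omega)) 0 (by omega)
  have h1 : γ 1 = α 1 := by
    have h := (hj 1 (by decide)).2 (by omega)
    rw [h, hv1, min_eq_right (by omega)]
  have h2 : α 2 < γ 2 := lt_of_lt_of_le (lt_min r2 hv2) (hj 2 (by decide)).1
  exact hM.2.2.1 γ hγ h1 (by omega) h2

lemma E1' (hB : PropB E) (hM : Mx E α) (h01 : W01 E α) :
    ∀ r ∈ E, r 1 = α 1 → α 0 < r 0 → α 2 < r 2 → False := by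
  intro r hr r1 r0 r2
  obtain ⟨v, hv, hv0, hv1, hv2⟩ := h01
  obtain ⟨γ, hγ, hγ1, hj⟩ := hB r hr v hv (ne_of_coord 0 (by omega)) 1 (by omega)
  have h0 : γ 0 = α 0 := by
    have h := (hj 0 (by decide)).2 (by omega)
    rw [h, hv0, min_eq_right (by omega)]
  have h2 : α 2 < γ 2 := lt_of_lt_of_le (lt_min r2 hv2) (hj 2 (by decide)).1
  exact hM.2.1 γ hγ h0 (by omega) h2

/-- Two relative maximals at the same level with the same first coordinate coincide. -/
lemma RM_x_inj {β : Fin 3 → ℤ} (hMα : Mx E α) (h01α : W01 E α) (hMβ : Mx E β)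
    (h01β : W01 E β) (hz2 : α 2 = β 2) (hx : α 0 = β 0) : α = β := by
  rcases lt_trichotomy (α 1) (β 1) with h|h|h
  · obtain ⟨v, hv, hv0, hv1, hv2⟩ := h01β
    exact ((hMα.2.1 v hv (by omega) (by omega) (by omega))).elim
  · exact eq3 hx h hz2
  · obtain ⟨v, hv, hv0, hv1, hv2⟩ := h01α
    exact ((hMβ.2.1 v hv (by omega) (by omega) (by omega))).elim

/-- Strict antichain property of relative maximals. -/
lemma RM_anti {β : Fin 3 → ℤ} (hMα : Mx E α) (hβE : β ∈ E) (h01β : W01 E β)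
    (hz2 : α 2 = β 2) (hx : α 0 < β 0) : β 1 < α 1 := by
  by_contra h
  push_neg at h
  rcases eq_or_lt_of_le h with he|hl
  · obtain ⟨v, hv, hv0, hv1, hv2⟩ := h01β
    exact hMα.2.2.1 v hv (by omega) (by omega) (by omega)
  · exact hMα.2.2.2 β hβE hz2.symm hx hl

/-- Two absolute maximals at the same level with the same first coordinate coincide. -/
lemma AM_x_inj {β : Fin 3 → ℤ} (hα : α ∈ E) (h02α : ¬W02 E α) (hβ : β ∈ E)
    (h02β : ¬W02 E β) (hz2 : α 2 = β 2) (hx : α 0 = β 0) : α = β := by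
  rcases lt_trichotomy (α 1) (β 1) with h|h|h
  · exact (h02α ⟨β, hβ, hx.symm, h, hz2.symm⟩).elim
  · exact eq3 hx h hz2
  · exact (h02β ⟨α, hα, hx, h, hz2⟩).elim

end L17

namespace L17
open Colength

variable {E : Set (Fin 3 → ℤ)} {z : ℤ} {α δ : Fin 3 → ℤ}

/-- The maximal points at a fixed level form a finite set. -/
lemma mx_fin (hC : PropC E) : {α : Fin 3 → ℤ | Mx E α ∧ α 2 = z}.Finite := by
  obtain ⟨⟨a, ha⟩, ⟨c, _, hc⟩⟩ := hC
  apply Set.Finite.subset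
    (Set.finite_Icc (fun i => min (a i) z) (fun _ => max (max (c 0) (c 1)) z))
  rintro α ⟨⟨hαE, hNF0, hNF1, _⟩, hz2⟩
  have hb : ∀ i, a i ≤ α i := fun i => ha α hαE i
  have h0 : α 0 < c 0 := by
    by_contra h
    push_neg at h
    refine hNF0 ![α 0, max (α 1 + 1) (c 1), max (α 2 + 1) (c 2)] (hc _ ?_) rfl ?_ ?_
    · intro i; rcases trich i with rfl|rfl|rfl
      · exact h
      · exact le_max_right _ _
      · exact le_max_right _ _
    · show α 1 < max (α 1 + 1) (c 1)
      have := le_max_left (α 1 + 1) (c 1); omega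
    · show α 2 < max (α 2 + 1) (c 2)
      have := le_max_left (α 2 + 1) (c 2); omega
  have h1 : α 1 < c 1 := by
    by_contra h
    push_neg at h
    refine hNF1 ![max (α 0 + 1) (c 0), α 1, max (α 2 + 1) (c 2)]
      (hc _ ?_) rfl ?_ ?_
    · intro i; rcases trich i with rfl|rfl|rfl
      · exact le_max_right _ _
      · exact h
      · exact le_max_right _ _
    · show α 0 < max (α 0 + 1) (c 0)
      have := le_max_left (α 0 + 1) (c 0); omega
    · show α 2 < max (α 2 + 1) (c 2)
      have := le_max_left (α 2 + 1) (c 2); omega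
  constructor
  · intro i; rcases trich i with rfl|rfl|rfl
    · exact le_trans (min_le_left _ _) (hb 0)
    · exact le_trans (min_le_left _ _) (hb 1)
    · rw [hz2]; exact min_le_right _ _
  · intro i; rcases trich i with rfl|rfl|rfl
    · show α 0 ≤ max (max (c 0) (c 1)) z
      have h := le_max_left (c 0) (c 1); have h' := le_max_left (max (c 0) (c 1)) z; omega
    · show α 1 ≤ max (max (c 0) (c 1)) z
      have h := le_max_right (c 0) (c 1); have h' := le_max_left (max (c 0) (c 1)) z; omega
    · show α 2 ≤ max (max (c 0) (c 1)) z
      rw [hz2]; exact le_max_right _ _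

end L17

namespace L17
open Colength

variable {E : Set (Fin 3 → ℤ)} {z : ℤ} {α δ : Fin 3 → ℤ}

lemma trich2 : ∀ i : Fin 2, i = 0 ∨ i = 1 := by decide

lemma hno13_use (hno : ¬∃ x : ℤ, IsMaximalPt (pr13 '' E) ![x, z])
    (hα : α ∈ E) (hz2 : α 2 = z) :
    (∃ β ∈ E, β 0 = α 0 ∧ z < β 2) ∨ (∃ β ∈ E, α 0 < β 0 ∧ β 2 = z) := by
  by_contra hcon
  push_neg at hcon
  obtain ⟨h1, h2⟩ := hcon
  refine hno ⟨α 0, ⟨α, hα, ?_⟩, fun i => ?_⟩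
  · show pr13 α = ![α 0, z]
    unfold pr13; rw [hz2]
  · rw [Set.eq_empty_iff_forall_notMem]
    rintro q ⟨⟨β, hβ, rfl⟩, hJ, hK⟩
    rcases trich2 i with rfl|rfl
    · have e0 : β 0 = α 0 := hJ 0 (by decide)
      have e1 : z < β 2 := hK 1 (by decide)
      exact absurd e1 (by have := h1 β hβ e0; omega)
    · have e0 : β 2 = z := hJ 1 (by decide)
      have e1 : α 0 < β 0 := hK 0 (by decide)
      exact absurd e0 (by have := h2 β hβ e1; omega)

lemma hno23_use (hno : ¬∃ y : ℤ, IsMaximalPt (pr23 '' E) ![y, z])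
    (hα : α ∈ E) (hz2 : α 2 = z) :
    (∃ β ∈ E, β 1 = α 1 ∧ z < β 2) ∨ (∃ β ∈ E, α 1 < β 1 ∧ β 2 = z) := by
  by_contra hcon
  push_neg at hcon
  obtain ⟨h1, h2⟩ := hcon
  refine hno ⟨α 1, ⟨α, hα, ?_⟩, fun i => ?_⟩
  · show pr23 α = ![α 1, z]
    unfold pr23; rw [hz2]
  · rw [Set.eq_empty_iff_forall_notMem]
    rintro q ⟨⟨β, hβ, rfl⟩, hJ, hK⟩
    rcases trich2 i with rfl|rfl
    · have e0 : β 1 = α 1 := hJ 0 (by decide)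
      have e1 : z < β 2 := hK 1 (by decide)
      exact absurd e1 (by have := h1 β hβ e0; omega)
    · have e0 : β 2 = z := hJ 1 (by decide)
      have e1 : α 1 < β 1 := hK 0 (by decide)
      exact absurd e0 (by have := h2 β hβ e1; omega)

/-- Below every absolute maximal (in its column) there is a relative maximal. -/
lemma D1 (hA : PropA E) (hB : PropB E)
    (hno : ¬∃ x : ℤ, IsMaximalPt (pr13 '' E) ![x, z])
    (hM : Mx E δ) (hz2 : δ 2 = z) (h01 : ¬W01 E δ) (h02 : ¬W02 E δ) (h12 : ¬W12 E δ) :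
    ∃ α, Mx E α ∧ W01 E α ∧ α 2 = z ∧ α 0 = δ 0 ∧ α 1 < δ 1 := by
  have hYne : ∃ y, (y < δ 1 ∧ ∃ q ∈ E, q 0 = δ 0 ∧ q 1 = y ∧ z < q 2) := by
    rcases hno13_use hno hM.1 hz2 with ⟨β, hβ, e0, e2⟩ | ⟨β, hβ, e0, e2⟩
    · rcases lt_trichotomy (β 1) (δ 1) with h|h|h
      · exact ⟨β 1, h, β, hβ, e0, rfl, e2⟩
      · exact absurd ⟨β, hβ, e0, h, by omega⟩ h01
      · exact (hM.2.1 β hβ e0 h (by omega)).elim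
    · rcases lt_trichotomy (β 1) (δ 1) with h|h|h
      · obtain ⟨γ, hγ, hγ2, hj⟩ := hB β hβ δ hM.1 (ne_of_coord 0 (by omega)) 2 (by omega)
        have g0 : γ 0 = δ 0 := by
          have h' := (hj 0 (by decide)).2 (by omega)
          rw [h', min_eq_right e0.le]
        have g1 : γ 1 = β 1 := by
          have h' := (hj 1 (by decide)).2 (by omega)
          rw [h', min_eq_left h.le]
        exact ⟨β 1, h, γ, hγ, g0, g1, by omega⟩
      · exact absurd ⟨β, hβ, e0, h, by omega⟩ h12
      · exact (hM.2.2.2 β hβ (by omega) e0 h).elim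
  obtain ⟨y', ⟨hy'lt, q, hq, hq0, hq1, hq2⟩, hy'max⟩ :=
    Int.exists_greatest_of_bdd ⟨δ 1, fun y hy => le_of_lt hy.1⟩ hYne
  have K : ∀ r ∈ E, r 0 = δ 0 → y' < r 1 → z < r 2 → False := by
    intro r hr r0 r1 r2
    rcases lt_trichotomy (r 1) (δ 1) with h|h|h
    · exact absurd (hy'max (r 1) ⟨h, r, hr, r0, rfl, r2⟩) (by omega)
    · exact h01 ⟨r, hr, r0, h, by omega⟩
    · exact hM.2.1 r hr r0 h (by omega)
  have hαE : (fun i => min (q i) (δ i)) ∈ E := hA q hq δ hM.1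
  set α : Fin 3 → ℤ := fun i => min (q i) (δ i) with hαdef
  have a0 : α 0 = δ 0 := by show min (q 0) (δ 0) = δ 0; rw [hq0, min_self]
  have a1 : α 1 = y' := by show min (q 1) (δ 1) = y'; rw [hq1]; exact min_eq_left hy'lt.le
  have a2 : α 2 = z := by show min (q 2) (δ 2) = z; rw [hz2]; exact min_eq_right (by omega)
  refine ⟨α, ⟨hαE, ?_, ?_, ?_⟩, ⟨q, hq, by omega, by omega, by omega⟩, a2, a0, by omega⟩
  · intro r hr r0 r1 r2
    exact K r hr (by omega) (by omega) (by omega)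
  · intro r hr r1 r0 r2
    obtain ⟨γ, hγ, hγ1, hj⟩ := hB r hr q hq (ne_of_coord 0 (by omega)) 1 (by omega)
    have g0 : γ 0 = δ 0 := by
      have h' := (hj 0 (by decide)).2 (by omega)
      rw [h', hq0]; exact min_eq_right (by omega)
    have g2 : z < γ 2 := lt_of_lt_of_le (lt_min (by omega) (by omega)) (hj 2 (by decide)).1
    exact K γ hγ g0 (by omega) g2
  · intro r hr r2 r0 r1
    rcases lt_trichotomy (r 1) (δ 1) with h|h|h
    · obtain ⟨γ, hγ, hγ2, hj⟩ := hB r hr δ hM.1 (ne_of_coord 1 (by omega)) 2 (by omega)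
      have g0 : γ 0 = δ 0 := by
        have h' := (hj 0 (by decide)).2 (by omega)
        rw [h']; exact min_eq_right (by omega)
      have g1 : γ 1 = r 1 := by
        have h' := (hj 1 (by decide)).2 (by omega)
        rw [h']; exact min_eq_left h.le
      exact K γ hγ g0 (by omega) (by omega)
    · exact h12 ⟨r, hr, by omega, by omega, by omega⟩
    · exact hM.2.2.2 r hr (by omega) (by omega) (by omega)

/-- Left of every absolute maximal (in its row) there is a relative maximal. -/
lemma D1' (hA : PropA E) (hB : PropB E)
    (hno : ¬∃ y : ℤ, IsMaximalPt (pr23 '' E) ![y, z])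
    (hM : Mx E δ) (hz2 : δ 2 = z) (h01 : ¬W01 E δ) (h02 : ¬W02 E δ) (h12 : ¬W12 E δ) :
    ∃ α, Mx E α ∧ W01 E α ∧ α 2 = z ∧ α 1 = δ 1 ∧ α 0 < δ 0 := by
  have hXne : ∃ x, (x < δ 0 ∧ ∃ q ∈ E, q 0 = x ∧ q 1 = δ 1 ∧ z < q 2) := by
    rcases hno23_use hno hM.1 hz2 with ⟨β, hβ, e0, e2⟩ | ⟨β, hβ, e0, e2⟩
    · rcases lt_trichotomy (β 0) (δ 0) with h|h|h
      · exact ⟨β 0, h, β, hβ, rfl, e0, e2⟩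
      · exact absurd ⟨β, hβ, h, e0, by omega⟩ h01
      · exact (hM.2.2.1 β hβ e0 h (by omega)).elim
    · rcases lt_trichotomy (β 0) (δ 0) with h|h|h
      · obtain ⟨γ, hγ, hγ2, hj⟩ := hB β hβ δ hM.1 (ne_of_coord 1 (by omega)) 2 (by omega)
        have g1 : γ 1 = δ 1 := by
          have h' := (hj 1 (by decide)).2 (by omega)
          rw [h', min_eq_right e0.le]
        have g0 : γ 0 = β 0 := by
          have h' := (hj 0 (by decide)).2 (by omega)
          rw [h', min_eq_left h.le]
        exact ⟨β 0, h, γ, hγ, g0, g1, by omega⟩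
      · exact absurd ⟨β, hβ, h, e0, by omega⟩ h02
      · exact (hM.2.2.2 β hβ (by omega) h e0).elim
  obtain ⟨x', ⟨hx'lt, q, hq, hq0, hq1, hq2⟩, hx'max⟩ :=
    Int.exists_greatest_of_bdd ⟨δ 0, fun x hx => le_of_lt hx.1⟩ hXne
  have K : ∀ r ∈ E, r 1 = δ 1 → x' < r 0 → z < r 2 → False := by
    intro r hr r1 r0 r2
    rcases lt_trichotomy (r 0) (δ 0) with h|h|h
    · exact absurd (hx'max (r 0) ⟨h, r, hr, rfl, r1, r2⟩) (by omega)
    · exact h01 ⟨r, hr, h, r1, by omega⟩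
    · exact hM.2.2.1 r hr r1 h (by omega)
  have hαE : (fun i => min (q i) (δ i)) ∈ E := hA q hq δ hM.1
  set α : Fin 3 → ℤ := fun i => min (q i) (δ i) with hαdef
  have a1 : α 1 = δ 1 := by show min (q 1) (δ 1) = δ 1; rw [hq1, min_self]
  have a0 : α 0 = x' := by show min (q 0) (δ 0) = x'; rw [hq0]; exact min_eq_left hx'lt.le
  have a2 : α 2 = z := by show min (q 2) (δ 2) = z; rw [hz2]; exact min_eq_right (by omega)
  refine ⟨α, ⟨hαE, ?_, ?_, ?_⟩, ⟨q, hq, by omega, by omega, by omega⟩, a2, a1, by omega⟩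
  · intro r hr r0 r1 r2
    obtain ⟨γ, hγ, hγ0, hj⟩ := hB r hr q hq (ne_of_coord 1 (by omega)) 0 (by omega)
    have g1 : γ 1 = δ 1 := by
      have h' := (hj 1 (by decide)).2 (by omega)
      rw [h', hq1]; exact min_eq_right (by omega)
    have g2 : z < γ 2 := lt_of_lt_of_le (lt_min (by omega) (by omega)) (hj 2 (by decide)).1
    exact K γ hγ g1 (by omega) g2
  · intro r hr r1 r0 r2
    exact K r hr (by omega) (by omega) (by omega)
  · intro r hr r2 r0 r1
    rcases lt_trichotomy (r 0) (δ 0) with h|h|h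
    · obtain ⟨γ, hγ, hγ2, hj⟩ := hB r hr δ hM.1 (ne_of_coord 0 (by omega)) 2 (by omega)
      have g1 : γ 1 = δ 1 := by
        have h' := (hj 1 (by decide)).2 (by omega)
        rw [h']; exact min_eq_right (by omega)
      have g0 : γ 0 = r 0 := by
        have h' := (hj 0 (by decide)).2 (by omega)
        rw [h']; exact min_eq_left h.le
      exact K γ hγ g1 (by omega) (by omega)
    · exact h02 ⟨r, hr, by omega, by omega, by omega⟩
    · exact hM.2.2.2 r hr (by omega) (by omega) (by omega)

/-- Above every non-minimal relative maximal (in its column) there is an absolute maximal. -/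
lemma D3b {β : Fin 3 → ℤ} (hB : PropB E) (hMα : Mx E α) (h01α : W01 E α) (hzα : α 2 = z)
    (hMβ : Mx E β) (hzβ : β 2 = z) (hx : β 0 < α 0) (hy : α 1 < β 1) :
    ∃ δ, Mx E δ ∧ ¬W01 E δ ∧ ¬W02 E δ ∧ ¬W12 E δ ∧ δ 2 = z ∧ δ 0 = α 0 ∧ α 1 < δ 1 := by
  have h02α : W02 E α := T3 hB hMα h01α
  obtain ⟨u, hu, hu0, hu1, hu2⟩ := h02α
  have hZbd : ∀ y : ℤ, (α 1 < y ∧ ∃ q ∈ E, q 0 = α 0 ∧ q 1 = y ∧ q 2 = z) → y ≤ β 1 := by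
    rintro y ⟨hy1, q, hq, q0, q1, q2⟩
    by_contra h
    push_neg at h
    exact hMβ.2.2.2 q hq (by omega) (by omega) (by omega)
  obtain ⟨y', ⟨hy'gt, q, hq, hq0, hq1, hq2⟩, hy'max⟩ :=
    Int.exists_greatest_of_bdd ⟨β 1, hZbd⟩ ⟨u 1, hu1, u, hu, hu0, rfl, by omega⟩
  refine ⟨q, ⟨hq, ?_, ?_, ?_⟩, ?_, ?_, ?_, hq2, hq0, by omega⟩
  · intro r hr r0 r1 r2
    exact E1 hB hMα h01α r hr (by omega) (by omega) (by omega)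
  · intro r hr r1 r0 r2
    obtain ⟨γ, hγ, hγ1, hj⟩ := hB r hr q hq (ne_of_coord 0 (by omega)) 1 (by omega)
    have g0 : γ 0 = α 0 := by
      have h' := (hj 0 (by decide)).2 (by omega)
      rw [h', hq0]; exact min_eq_right (by omega)
    have g2 : γ 2 = z := by
      have h' := (hj 2 (by decide)).2 (by omega)
      rw [h', hq2]; exact min_eq_right (by omega)
    exact absurd (hy'max (γ 1) ⟨by omega, γ, hγ, g0, rfl, g2⟩) (by omega)
  · intro r hr r2 r0 r1
    exact hMα.2.2.2 r hr (by omega) (by omega) (by omega)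
  · rintro ⟨r, hr, r0, r1, r2⟩
    exact E1 hB hMα h01α r hr (by omega) (by omega) (by omega)
  · rintro ⟨r, hr, r0, r1, r2⟩
    exact absurd (hy'max (r 1) ⟨by omega, r, hr, by omega, rfl, by omega⟩) (by omega)
  · rintro ⟨r, hr, r0, r1, r2⟩
    exact hMα.2.2.2 r hr (by omega) (by omega) (by omega)

end L17

open L17


open Colength in
/-- Lemma 17: if `z` is the third coordinate of some relative
maximal but of no maximal point of `E_{13}` nor of `E_{23}`, and there are
exactly `s` relative maximals at level `z`, then there are exactly `s - 1`
absolute maximals at level `z`. -/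
theorem abs_maximal_count_case_RM_only (E : Set (Fin 3 → ℤ))
    (hA : PropA E) (hB : PropB E) (hC : PropC E) (z : ℤ)
    (hz : ∃ α : Fin 3 → ℤ, IsRelMax E α ∧ α 2 = z)
    (hno13 : ¬∃ x : ℤ, IsMaximalPt (pr13 '' E) ![x, z])
    (hno23 : ¬∃ y : ℤ, IsMaximalPt (pr23 '' E) ![y, z])
    (s : ℕ) (hs : {α : Fin 3 → ℤ | IsRelMax E α ∧ α 2 = z}.ncard = s) :
    {α : Fin 3 → ℤ | IsAbsMax E α ∧ α 2 = z}.ncard = s - 1 := by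
  classical
  -- Reformulate the two sets
  have hSR : {α : Fin 3 → ℤ | IsRelMax E α ∧ α 2 = z}
      = {α : Fin 3 → ℤ | (Mx E α ∧ W01 E α) ∧ α 2 = z} := by
    ext α
    simp only [Set.mem_setOf_eq]
    constructor
    · rintro ⟨hR, h2⟩
      have h := isRel_iff.mp hR
      exact ⟨⟨h.1, h.2.1⟩, h2⟩
    · rintro ⟨⟨hM, h01⟩, h2⟩
      exact ⟨isRel_iff.mpr ⟨hM, h01, T3 hB hM h01, T3' hB hM h01⟩, h2⟩
  have hSA : {α : Fin 3 → ℤ | IsAbsMax E α ∧ α 2 = z}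
      = {α : Fin 3 → ℤ | (Mx E α ∧ ¬W01 E α) ∧ α 2 = z} := by
    ext α
    simp only [Set.mem_setOf_eq]
    constructor
    · rintro ⟨hAb, h2⟩
      have h := isAbs_iff.mp hAb
      exact ⟨⟨h.1, h.2.1⟩, h2⟩
    · rintro ⟨⟨hM, h01⟩, h2⟩
      have h02 : ¬W02 E α := fun h => h01 (T2 hB h (T1' hB hM h))
      have h12 : ¬W12 E α := fun h => h02 (T1 hB hM h)
      exact ⟨isAbs_iff.mpr ⟨hM, h01, h02, h12⟩, h2⟩
  rw [hSA]
  rw [hSR] at hs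
  set R := {α : Fin 3 → ℤ | (Mx E α ∧ W01 E α) ∧ α 2 = z} with hRdef
  set A := {α : Fin 3 → ℤ | (Mx E α ∧ ¬W01 E α) ∧ α 2 = z} with hAdef
  have hMfin : {α : Fin 3 → ℤ | Mx E α ∧ α 2 = z}.Finite := mx_fin hC
  have hRfin : R.Finite := hMfin.subset (by rintro α ⟨⟨hM, _⟩, h2⟩; exact ⟨hM, h2⟩)
  have hAfin : A.Finite := hMfin.subset (by rintro α ⟨⟨hM, _⟩, h2⟩; exact ⟨hM, h2⟩)
  obtain ⟨α₀, hα₀R, hα₀2⟩ := hz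
  have hα₀mem : α₀ ∈ R := by
    rw [hRdef]
    have h := isRel_iff.mp hα₀R
    exact ⟨⟨h.1, h.2.1⟩, hα₀2⟩
  obtain ⟨m, hmR, hmmin⟩ := Set.exists_min_image R (fun α => α 0) hRfin ⟨α₀, hα₀mem⟩
  -- the map from absolute maximals to relative maximals below them
  have hch : ∀ δ, δ ∈ A → ∃ α, (α ∈ R) ∧ α 0 = δ 0 ∧ α 1 < δ 1 := by
    rintro δ ⟨⟨hM, h01⟩, h2⟩
    have h02 : ¬W02 E δ := fun h => h01 (T2 hB h (T1' hB hM h))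
    have h12 : ¬W12 E δ := fun h => h02 (T1 hB hM h)
    obtain ⟨α, hMα, h01α, ha2, ha0, ha1⟩ := D1 hA hB hno13 hM h2 h01 h02 h12
    exact ⟨α, ⟨⟨hMα, h01α⟩, ha2⟩, ha0, ha1⟩
  choose! f hf using hch
  have hinj : Set.InjOn f A := by
    rintro δ hδ δ' hδ' he
    obtain ⟨hfR, hf0, hf1⟩ := hf δ hδ
    obtain ⟨hfR', hf0', hf1'⟩ := hf δ' hδ'
    obtain ⟨⟨hMδ, h01δ⟩, h2δ⟩ := hδ
    obtain ⟨⟨hMδ', h01δ'⟩, h2δ'⟩ := hδ'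
    have h02δ : ¬W02 E δ := fun h => h01δ (T2 hB h (T1' hB hMδ h))
    have h02δ' : ¬W02 E δ' := fun h => h01δ' (T2 hB h (T1' hB hMδ' h))
    exact AM_x_inj hMδ.1 h02δ hMδ'.1 h02δ' (by omega) (by rw [← hf0, ← hf0', he])
  have himg : f '' A = R \ {m} := by
    ext α
    constructor
    · rintro ⟨δ, hδ, rfl⟩
      obtain ⟨hfR, hf0, hf1⟩ := hf δ hδ
      refine ⟨hfR, ?_⟩
      obtain ⟨⟨hMδ, h01δ⟩, h2δ⟩ := hδ
      have h02δ : ¬W02 E δ := fun h => h01δ (T2 hB h (T1' hB hMδ h))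
      have h12δ : ¬W12 E δ := fun h => h02δ (T1 hB hMδ h)
      obtain ⟨α'', hMα'', h01α'', ha2'', ha1'', ha0''⟩ := D1' hA hB hno23 hMδ h2δ h01δ h02δ h12δ
      have hα''R : α'' ∈ R := ⟨⟨hMα'', h01α''⟩, ha2''⟩
      have hle : m 0 ≤ α'' 0 := hmmin α'' hα''R
      simp only [Set.mem_singleton_iff]
      intro hEq
      have : f δ 0 = m 0 := by rw [hEq]
      omega
    · rintro ⟨hαR, hαne⟩
      simp only [Set.mem_singleton_iff] at hαne
      obtain ⟨⟨hMα, h01α⟩, h2α⟩ := hαR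
      obtain ⟨⟨hMm, h01m⟩, h2m⟩ := hmR
      have hlt : m 0 < α 0 := by
        rcases eq_or_lt_of_le (hmmin α (by exact ⟨⟨hMα, h01α⟩, h2α⟩)) with he|hl
        · exact absurd (RM_x_inj hMα h01α hMm h01m (by omega) he.symm) hαne
        · exact hl
      have hy : α 1 < m 1 := RM_anti hMm hMα.1 h01α (by omega) hlt
      obtain ⟨δ, hMδ, h01δ, h02δ, h12δ, hd2, hd0, hd1⟩ :=
        D3b hB hMα h01α h2α hMm h2m hlt hy
      have hδA : δ ∈ A := ⟨⟨hMδ, h01δ⟩, hd2⟩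
      refine ⟨δ, hδA, ?_⟩
      obtain ⟨hfR, hf0, hf1⟩ := hf δ hδA
      obtain ⟨⟨hMf, h01f⟩, h2f⟩ := hfR
      exact RM_x_inj hMf h01f hMα h01α (by omega) (by omega)
  calc A.ncard = (f '' A).ncard := (Set.ncard_image_of_injOn hinj).symm
    _ = (R \ {m}).ncard := by rw [himg]
    _ = R.ncard - 1 := Set.ncard_diff_singleton_of_mem hmR
    _ = s - 1 := by rw [hs]
end

section
/- Let E ⊆ ℤ³ satisfy properties (A), (B), (C), and fix z ∈ ℤ. Suppose z ∈ pr_3(RM(E)), there exists a maximal point (b_1, z) ∈ M(E_{{1,3}}), and there exists a maximal point (b_2, z) ∈ M(E_{{2,3}}). If there are exactly s relative maximals of E with third coordinate z, then there are exactly s + 1 absolute maximals of E with third coordinate z. -/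
namespace ColengthAux
open Colength

private lemma fin3 (i : Fin 3) : i = 0 ∨ i = 1 ∨ i = 2 := by fin_cases i <;> simp

private lemma ext3 {β γ : Fin 3 → ℤ} (h0 : β 0 = γ 0) (h1 : β 1 = γ 1)
    (h2 : β 2 = γ 2) : β = γ := by
  funext i; rcases fin3 i with rfl | rfl | rfl <;> assumption

private lemma ne_of_coord {β γ : Fin 3 → ℤ} (i : Fin 3) (h : β i ≠ γ i) : β ≠ γ :=
  fun he => h (by rw [he])

/-- `θ` is a maximal element of `E` at level `z` (in the first two coordinates). -/
def MaxPt (E : Set (Fin 3 → ℤ)) (z : ℤ) (θ : Fin 3 → ℤ) : Prop :=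
  θ ∈ E ∧ θ 2 = z ∧ ∀ β ∈ E, β 2 = z → θ 0 ≤ β 0 → θ 1 ≤ β 1 → β = θ

variable {E : Set (Fin 3 → ℤ)} {z : ℤ}

lemma no_up0 (hB : PropB E) {θ : Fin 3 → ℤ} (hθ : MaxPt E z θ) {β : Fin 3 → ℤ}
    (hβE : β ∈ E) (h0 : β 0 = θ 0) (h1 : θ 1 ≤ β 1) (h2 : z < β 2) : False := by
  obtain ⟨hθE, hθ2, hmax⟩ := hθ
  obtain ⟨γ, hγE, hγ0, hγj⟩ := hB θ hθE β hβE (ne_of_coord 2 (by omega)) 0 h0.symm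
  have h2' := (hγj 2 (by decide)).2 (by omega)
  have h1' := (hγj 1 (by decide)).1
  have hγ2 : γ 2 = z := by omega
  have hγ1 : θ 1 ≤ γ 1 := by omega
  have := hmax γ hγE hγ2 (le_of_lt hγ0) hγ1
  rw [this] at hγ0; omega

lemma no_up1 (hB : PropB E) {θ : Fin 3 → ℤ} (hθ : MaxPt E z θ) {β : Fin 3 → ℤ}
    (hβE : β ∈ E) (h1 : β 1 = θ 1) (h0 : θ 0 ≤ β 0) (h2 : z < β 2) : False := by
  obtain ⟨hθE, hθ2, hmax⟩ := hθ
  obtain ⟨γ, hγE, hγ1, hγj⟩ := hB θ hθE β hβE (ne_of_coord 2 (by omega)) 1 h1.symm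
  have h2' := (hγj 2 (by decide)).2 (by omega)
  have h0' := (hγj 0 (by decide)).1
  have hγ2 : γ 2 = z := by omega
  have hγ0 : θ 0 ≤ γ 0 := by omega
  have := hmax γ hγE hγ2 hγ0 (le_of_lt hγ1)
  rw [this] at hγ1; omega

lemma maxPt_of_absMax {θ : Fin 3 → ℤ} (h : IsAbsMax E θ) (h2 : θ 2 = z) :
    MaxPt E z θ := by
  refine ⟨h.1, h2, ?_⟩
  intro β hβE hβ2 hle0 hle1
  by_contra hne
  rcases eq_or_lt_of_le hle0 with he0 | hlt0 <;> rcases eq_or_lt_of_le hle1 with he1 | hlt1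
  · exact hne (ext3 he0.symm he1.symm (by omega))
  · have hf := h.2 {0, 2} (by decide) (by decide)
    rw [Set.eq_empty_iff_forall_notMem] at hf
    refine hf β ⟨hβE, ?_, ?_⟩
    · intro j hj
      rcases fin3 j with rfl | rfl | rfl
      · omega
      · exact absurd hj (by decide)
      · omega
    · intro i hi
      rcases fin3 i with rfl | rfl | rfl
      · exact absurd (by decide) hi
      · exact hlt1
      · exact absurd (by decide) hi
  · have hf := h.2 {1, 2} (by decide) (by decide)
    rw [Set.eq_empty_iff_forall_notMem] at hf
    refine hf β ⟨hβE, ?_, ?_⟩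
    · intro j hj
      rcases fin3 j with rfl | rfl | rfl
      · exact absurd hj (by decide)
      · omega
      · omega
    · intro i hi
      rcases fin3 i with rfl | rfl | rfl
      · exact hlt0
      · exact absurd (by decide) hi
      · exact absurd (by decide) hi
  · have hf := h.2 {2} (by decide) (by decide)
    rw [Set.eq_empty_iff_forall_notMem] at hf
    refine hf β ⟨hβE, ?_, ?_⟩
    · intro j hj
      rcases fin3 j with rfl | rfl | rfl
      · exact absurd hj (by decide)
      · exact absurd hj (by decide)
      · omega
    · intro i hi
      rcases fin3 i with rfl | rfl | rfl
      · exact hlt0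
      · exact hlt1
      · exact absurd (by decide) hi

lemma absMax_of_maxPt (hB : PropB E) {θ : Fin 3 → ℤ} (h : MaxPt E z θ) :
    IsAbsMax E θ := by
  refine ⟨h.1, ?_⟩
  intro J hne huniv
  have hJ : J = {0} ∨ J = {1} ∨ J = {2} ∨ J = {0, 1} ∨ J = {0, 2} ∨ J = {1, 2} := by
    revert hne huniv; revert J; decide
  rw [Set.eq_empty_iff_forall_notMem]
  rintro β ⟨hβE, heq, hlt⟩
  have hθ2 := h.2.1
  rcases hJ with rfl | rfl | rfl | rfl | rfl | rfl
  · exact no_up0 hB h hβE (heq 0 (by decide))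
      (le_of_lt (hlt 1 (by decide))) (by have := hlt 2 (by decide); omega)
  · exact no_up1 hB h hβE (heq 1 (by decide))
      (le_of_lt (hlt 0 (by decide))) (by have := hlt 2 (by decide); omega)
  · have h0 := hlt 0 (by decide)
    have := h.2.2 β hβE (by have := heq 2 (by decide); omega)
      (le_of_lt h0) (le_of_lt (hlt 1 (by decide)))
    rw [this] at h0; omega
  · exact no_up0 hB h hβE (heq 0 (by decide))
      (le_of_eq (heq 1 (by decide)).symm) (by have := hlt 2 (by decide); omega)
  · have h1 := hlt 1 (by decide)
    have := h.2.2 β hβE (by have := heq 2 (by decide); omega)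
      (le_of_eq (heq 0 (by decide)).symm) (le_of_lt h1)
    rw [this] at h1; omega
  · have h0 := hlt 0 (by decide)
    have := h.2.2 β hβE (by have := heq 2 (by decide); omega)
      (le_of_lt h0) (le_of_eq (heq 1 (by decide)).symm)
    rw [this] at h0; omega

lemma maxPt_unique {θ θ' : Fin 3 → ℤ} (h : MaxPt E z θ) (h' : MaxPt E z θ')
    (h0 : θ 0 = θ' 0) : θ = θ' := by
  rcases le_total (θ 1) (θ' 1) with hle | hle
  · exact (h.2.2 θ' h'.1 h'.2.1 h0.le hle).symm
  · exact h'.2.2 θ h.1 h.2.1 h0.ge hle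

lemma relMax_F2 {α : Fin 3 → ℤ} (h : IsRelMax E α) {β : Fin 3 → ℤ} (hβE : β ∈ E)
    (hβ2 : β 2 = α 2) (h0 : α 0 < β 0) (h1 : α 1 < β 1) : False := by
  have hf := h.1.2 2
  rw [Set.eq_empty_iff_forall_notMem] at hf
  refine hf β ⟨hβE, ?_, ?_⟩
  · intro j hj
    rcases fin3 j with rfl | rfl | rfl
    · exact absurd hj (by decide)
    · exact absurd hj (by decide)
    · exact hβ2
  · intro i hi
    rcases fin3 i with rfl | rfl | rfl
    · exact h0
    · exact h1
    · exact absurd (by decide) hi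

lemma relMax_pair {α : Fin 3 → ℤ} (h : IsRelMax E α) (J : Finset (Fin 3))
    (hcard : 2 ≤ J.card) :
    ∃ β ∈ E, (∀ j ∈ J, β j = α j) ∧ (∀ i ∉ J, α i < β i) := by
  obtain ⟨β, hβ⟩ := Set.nonempty_iff_ne_empty.2 (h.2 J hcard)
  exact ⟨β, hβ.1, hβ.2.1, hβ.2.2⟩

lemma relMax_inj {α α' : Fin 3 → ℤ} (hα : IsRelMax E α) (hα2 : α 2 = z)
    (hα' : IsRelMax E α') (hα'2 : α' 2 = z) (h0 : α 0 = α' 0) : α = α' := by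
  rcases lt_trichotomy (α 1) (α' 1) with h | h | h
  · obtain ⟨q, hqE, hq1, hq2⟩ := relMax_pair hα' {1, 2} (by decide)
    have e1 := hq1 1 (by decide)
    have e2 := hq1 2 (by decide)
    have e0 := hq2 0 (by decide)
    exact (relMax_F2 hα hqE (by omega) (by omega) (by omega)).elim
  · exact ext3 h0 h (by omega)
  · obtain ⟨q, hqE, hq1, hq2⟩ := relMax_pair hα {1, 2} (by decide)
    have e1 := hq1 1 (by decide)
    have e2 := hq1 2 (by decide)
    have e0 := hq2 0 (by decide)
    exact (relMax_F2 hα' hqE (by omega) (by omega) (by omega)).elim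

lemma relMax_companion {b2 : ℤ} (hb2 : ∀ β ∈ E, β 2 = z → β 1 ≤ b2)
    {α : Fin 3 → ℤ} (hα : IsRelMax E α) (hα2 : α 2 = z) :
    ∃ θ, MaxPt E z θ ∧ θ 0 = α 0 := by
  obtain ⟨Y, ⟨θ, hθE, hθ0, hθ2, hθ1⟩, hYmax⟩ :=
    Int.exists_greatest_of_bdd (P := fun y => ∃ β ∈ E, β 0 = α 0 ∧ β 2 = z ∧ β 1 = y)
      ⟨b2, fun y ⟨β, hβE, _, hβ2, hβ1⟩ => hβ1 ▸ hb2 β hβE hβ2⟩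
      ⟨α 1, α, hα.1.1, rfl, hα2, rfl⟩
  obtain ⟨q, hqE, hq1, hq2⟩ := relMax_pair hα {0, 2} (by decide)
  have e0 := hq1 0 (by decide)
  have e2 := hq1 2 (by decide)
  have e1 := hq2 1 (by decide)
  have hqY : q 1 ≤ Y := hYmax (q 1) ⟨q, hqE, by omega, by omega, rfl⟩
  refine ⟨θ, ⟨hθE, hθ2, ?_⟩, hθ0⟩
  intro r hrE hr2 h0 h1
  rcases eq_or_lt_of_le h0 with heq0 | hlt0
  · have := hYmax (r 1) ⟨r, hrE, by omega, hr2, rfl⟩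
    exact ext3 (by omega) (by omega) (by omega)
  · exact (relMax_F2 hα hrE (by omega) (by omega) (by omega)).elim

lemma exists_top {b1 b2 : ℤ} (hb1 : ∀ β ∈ E, β 2 = z → β 0 ≤ b1)
    (hb2 : ∀ β ∈ E, β 2 = z → β 1 ≤ b2)
    (hb1' : ∃ β ∈ E, β 0 = b1 ∧ β 2 = z) :
    ∃ θ, MaxPt E z θ ∧ θ 0 = b1 := by
  obtain ⟨β', hβ'E, hβ'0, hβ'2⟩ := hb1'
  obtain ⟨Y, ⟨θ, hθE, hθ0, hθ2, hθ1⟩, hYmax⟩ :=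
    Int.exists_greatest_of_bdd (P := fun y => ∃ β ∈ E, β 0 = b1 ∧ β 2 = z ∧ β 1 = y)
      ⟨b2, fun y ⟨β, hβE, _, hβ2, hβ1⟩ => hβ1 ▸ hb2 β hβE hβ2⟩
      ⟨β' 1, β', hβ'E, hβ'0, hβ'2, rfl⟩
  refine ⟨θ, ⟨hθE, hθ2, ?_⟩, hθ0⟩
  intro r hrE hr2 h0 h1
  have hr0 : r 0 = b1 := le_antisymm (hb1 r hrE hr2) (by omega)
  have := hYmax (r 1) ⟨r, hrE, hr0, hr2, rfl⟩
  exact ext3 (by omega) (by omega) (by omega)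

lemma exists_relMax_of_maxPt (hA : PropA E) (hB : PropB E) {b1 b2 : ℤ}
    (hb1 : ∀ β ∈ E, β 2 = z → β 0 ≤ b1) (hb2 : ∀ β ∈ E, β 2 = z → β 1 ≤ b2)
    (hb1' : ∃ β ∈ E, β 0 = b1 ∧ β 2 = z)
    {θ : Fin 3 → ℤ} (hθ : MaxPt E z θ) (hne : θ 0 ≠ b1) :
    ∃ μ, IsRelMax E μ ∧ μ 2 = z ∧ μ 0 = θ 0 := by
  obtain ⟨hθE, hθ2, hmax⟩ := hθ
  obtain ⟨β', hβ'E, hβ'0, hβ'2⟩ := hb1'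
  have hθb1 : θ 0 < b1 := lt_of_le_of_ne (hb1 θ hθE hθ2) hne
  obtain ⟨m, ⟨δ, hδE, hδ2, hδ0, hδ1⟩, hm⟩ :=
    Int.exists_greatest_of_bdd (P := fun y => ∃ β ∈ E, β 2 = z ∧ θ 0 < β 0 ∧ β 1 = y)
      ⟨b2, fun y ⟨β, hβE, hβ2, _, hβ1⟩ => hβ1 ▸ hb2 β hβE hβ2⟩
      ⟨β' 1, β', hβ'E, hβ'2, by omega, rfl⟩
  have hmθ : m < θ 1 := by
    by_contra hc
    have := hmax δ hδE hδ2 (le_of_lt hδ0) (by omega)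
    rw [this] at hδ0; omega
  set μ : Fin 3 → ℤ := fun i => min (θ i) (δ i) with hμdef
  have hμE : μ ∈ E := hA θ hθE δ hδE
  have hμ0 : μ 0 = θ 0 := by simp only [hμdef]; omega
  have hμ1 : μ 1 = m := by simp only [hμdef]; omega
  have hμ2 : μ 2 = z := by simp only [hμdef]; omega
  refine ⟨μ, ⟨⟨hμE, ?_⟩, ?_⟩, hμ2, hμ0⟩
  · -- maximal point: every singleton fiber is empty
    intro i
    rw [Set.eq_empty_iff_forall_notMem]
    rintro β ⟨hβE, heq, hlt⟩
    rcases fin3 i with rfl | rfl | rfl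
    · have e0 := heq 0 (by decide)
      have l1 := hlt 1 (by decide)
      have l2 := hlt 2 (by decide)
      obtain ⟨γ, hγE, hγ0, hγj⟩ := hB θ hθE β hβE (ne_of_coord 2 (by omega)) 0 (by omega)
      have g1 := (hγj 1 (by decide)).1
      have g2 := (hγj 2 (by decide)).2 (by omega)
      have := hm (γ 1) ⟨γ, hγE, by omega, by omega, rfl⟩
      omega
    · have e1 := heq 1 (by decide)
      have l0 := hlt 0 (by decide)
      have l2 := hlt 2 (by decide)
      obtain ⟨γ, hγE, hγ1, hγj⟩ := hB δ hδE β hβE (ne_of_coord 2 (by omega)) 1 (by omega)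
      have g0 := (hγj 0 (by decide)).1
      have g2 := (hγj 2 (by decide)).2 (by omega)
      have := hm (γ 1) ⟨γ, hγE, by omega, by omega, rfl⟩
      omega
    · have e2 := heq 2 (by decide)
      have l0 := hlt 0 (by decide)
      have l1 := hlt 1 (by decide)
      have := hm (β 1) ⟨β, hβE, by omega, by omega, rfl⟩
      omega
  · -- all 2-fibers nonempty
    intro J hcard
    have hJ : J = {0, 1} ∨ J = {0, 2} ∨ J = {1, 2} ∨ J = Finset.univ := by
      revert hcard; revert J; decide
    rw [← Set.nonempty_iff_ne_empty]
    rcases hJ with rfl | rfl | rfl | rfl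
    · obtain ⟨γ, hγE, hγ2, hγj⟩ := hB θ hθE δ hδE (ne_of_coord 0 (by omega)) 2 (by omega)
      have g0 := (hγj 0 (by decide)).2 (by omega)
      have g1 := (hγj 1 (by decide)).2 (by omega)
      refine ⟨γ, hγE, ?_, ?_⟩
      · intro j hj
        rcases fin3 j with rfl | rfl | rfl
        · omega
        · omega
        · exact absurd hj (by decide)
      · intro i hi
        rcases fin3 i with rfl | rfl | rfl
        · exact absurd (by decide) hi
        · exact absurd (by decide) hi
        · omega
    · refine ⟨θ, hθE, ?_, ?_⟩
      · intro j hj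
        rcases fin3 j with rfl | rfl | rfl
        · omega
        · exact absurd hj (by decide)
        · omega
      · intro i hi
        rcases fin3 i with rfl | rfl | rfl
        · exact absurd (by decide) hi
        · omega
        · exact absurd (by decide) hi
    · refine ⟨δ, hδE, ?_, ?_⟩
      · intro j hj
        rcases fin3 j with rfl | rfl | rfl
        · exact absurd hj (by decide)
        · omega
        · omega
      · intro i hi
        rcases fin3 i with rfl | rfl | rfl
        · omega
        · exact absurd (by decide) hi
        · exact absurd (by decide) hi
    · exact ⟨μ, hμE, fun j _ => rfl, fun i hi => absurd (Finset.mem_univ i) hi⟩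

noncomputable def F (E : Set (Fin 3 → ℤ)) (z : ℤ) (α : Fin 3 → ℤ) : Fin 3 → ℤ :=
  Classical.epsilon (fun θ => MaxPt E z θ ∧ θ 0 = α 0)

lemma F_spec {α : Fin 3 → ℤ} (h : ∃ θ, MaxPt E z θ ∧ θ 0 = α 0) :
    MaxPt E z (F E z α) ∧ (F E z α) 0 = α 0 :=
  Classical.epsilon_spec h

end ColengthAux

open ColengthAux

open Colength in
/-- Lemma 16: if `z` occurs as third coordinate of a relative
maximal and both `E_{13}` and `E_{23}` have maximal points at level `z`, then
`s` relative maximals at level `z` give `s + 1` absolute maximals at level `z`. -/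
theorem abs_maximal_count_case_both_and_RM (E : Set (Fin 3 → ℤ))
    (hA : PropA E) (hB : PropB E) (hC : PropC E) (z : ℤ)
    (hz : ∃ α : Fin 3 → ℤ, IsRelMax E α ∧ α 2 = z)
    (h13 : ∃ b1 : ℤ, IsMaximalPt (pr13 '' E) ![b1, z])
    (h23 : ∃ b2 : ℤ, IsMaximalPt (pr23 '' E) ![b2, z])
    (s : ℕ) (hs : {α : Fin 3 → ℤ | IsRelMax E α ∧ α 2 = z}.ncard = s) :
    {α : Fin 3 → ℤ | IsAbsMax E α ∧ α 2 = z}.ncard = s + 1 := by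
  classical
  rw [← hs]
  clear hs
  obtain ⟨b1, hm13⟩ := h13
  obtain ⟨b2, hm23⟩ := h23
  have fin2 : ∀ i : Fin 2, i = 0 ∨ i = 1 := by decide
  -- upper bound on first coordinates at level z
  have hb1 : ∀ β ∈ E, β 2 = z → β 0 ≤ b1 := by
    intro β hβE hβ2
    by_contra hgt
    push_neg at hgt
    have hf := hm13.2 1
    rw [Set.eq_empty_iff_forall_notMem] at hf
    refine hf (pr13 β) ⟨Set.mem_image_of_mem _ hβE, ?_, ?_⟩
    · intro j hj
      have hj1 : j = 1 := Finset.mem_singleton.mp hj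
      subst hj1
      show pr13 β 1 = ![b1, z] 1
      simp [pr13, hβ2]
    · intro i hi
      rcases fin2 i with rfl | rfl
      · show ![b1, z] 0 < pr13 β 0
        simpa [pr13] using hgt
      · exact absurd (by decide) hi
  -- upper bound on second coordinates at level z
  have hb2 : ∀ β ∈ E, β 2 = z → β 1 ≤ b2 := by
    intro β hβE hβ2
    by_contra hgt
    push_neg at hgt
    have hf := hm23.2 1
    rw [Set.eq_empty_iff_forall_notMem] at hf
    refine hf (pr23 β) ⟨Set.mem_image_of_mem _ hβE, ?_, ?_⟩
    · intro j hj
      have hj1 : j = 1 := Finset.mem_singleton.mp hj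
      subst hj1
      show pr23 β 1 = ![b2, z] 1
      simp [pr23, hβ2]
    · intro i hi
      rcases fin2 i with rfl | rfl
      · show ![b2, z] 0 < pr23 β 0
        simpa [pr23] using hgt
      · exact absurd (by decide) hi
  -- level z contains a point with first coordinate b1
  have hb1' : ∃ β ∈ E, β 0 = b1 ∧ β 2 = z := by
    obtain ⟨β, hβE, hβeq⟩ := hm13.1
    have h0 := congrFun hβeq 0
    have h1 := congrFun hβeq 1
    simp [pr13] at h0 h1
    exact ⟨β, hβE, h0, h1⟩
  obtain ⟨a, ha⟩ := hC.1
  have hfin : {θ | MaxPt E z θ ∧ θ 0 ≠ b1}.Finite := by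
    apply Set.Finite.subset
      (Set.Finite.pi (fun i : Fin 3 => Set.finite_Icc (a i) (![b1, b2, z] i)))
    rintro θ ⟨hθ, -⟩
    rw [Set.mem_pi]
    intro i _
    rw [Set.mem_Icc]
    refine ⟨ha θ hθ.1 i, ?_⟩
    have e0 := hb1 θ hθ.1 hθ.2.1
    have e1 := hb2 θ hθ.1 hθ.2.1
    have e2 := hθ.2.1
    rcases fin3 i with rfl | rfl | rfl <;> simp <;> omega
  -- absolute maximals at level z are exactly the maximal elements at level z
  have hAR : {α : Fin 3 → ℤ | IsAbsMax E α ∧ α 2 = z} = {θ | MaxPt E z θ} :=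
    Set.ext fun θ => ⟨fun h => maxPt_of_absMax h.1 h.2,
      fun h => ⟨absMax_of_maxPt hB h, h.2.1⟩⟩
  rw [hAR]
  obtain ⟨θt, hθt, hθt0⟩ := exists_top hb1 hb2 hb1'
  have hsplit : {θ | MaxPt E z θ} =
      insert θt {θ | MaxPt E z θ ∧ θ 0 ≠ b1} := by
    ext θ
    simp only [Set.mem_insert_iff, Set.mem_setOf_eq]
    constructor
    · intro h
      by_cases hb : θ 0 = b1
      · exact Or.inl (maxPt_unique h hθt (hb.trans hθt0.symm))
      · exact Or.inr ⟨h, hb⟩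
    · rintro (rfl | ⟨h, _⟩)
      exacts [hθt, h]
  have himg : {θ | MaxPt E z θ ∧ θ 0 ≠ b1} =
      F E z '' {α : Fin 3 → ℤ | IsRelMax E α ∧ α 2 = z} := by
    ext θ
    constructor
    · rintro ⟨hθ, hθb⟩
      obtain ⟨μ, hμR, hμ2, hμ0⟩ := exists_relMax_of_maxPt hA hB hb1 hb2 hb1' hθ hθb
      refine ⟨μ, ⟨hμR, hμ2⟩, ?_⟩
      obtain ⟨hFθ, hF0⟩ := F_spec (E := E) (z := z) (α := μ) ⟨θ, hθ, hμ0.symm⟩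
      exact maxPt_unique hFθ hθ (by omega)
    · rintro ⟨α, ⟨hαR, hα2⟩, rfl⟩
      obtain ⟨hFθ, hF0⟩ := F_spec (E := E) (z := z) (α := α) (relMax_companion hb2 hαR hα2)
      refine ⟨hFθ, ?_⟩
      obtain ⟨q, hqE, hq1, hq2⟩ := relMax_pair hαR {1, 2} (by decide)
      have e2 := hq1 2 (by decide)
      have e0 := hq2 0 (by decide)
      have := hb1 q hqE (by omega)
      omega
  have hinj : Set.InjOn (F E z) {α : Fin 3 → ℤ | IsRelMax E α ∧ α 2 = z} := by
    rintro α ⟨hαR, hα2⟩ α' ⟨hα'R, hα'2⟩ he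
    have h1 := (F_spec (E := E) (z := z) (α := α) (relMax_companion hb2 hαR hα2)).2
    have h2 := (F_spec (E := E) (z := z) (α := α') (relMax_companion hb2 hα'R hα'2)).2
    exact relMax_inj hαR hα2 hα'R hα'2 (by rw [← h1, ← h2, he])
  have hRcard : {θ | MaxPt E z θ ∧ θ 0 ≠ b1}.ncard =
      {α : Fin 3 → ℤ | IsRelMax E α ∧ α 2 = z}.ncard := by
    rw [himg, Set.ncard_image_of_injOn hinj]
  have hnm : θt ∉ {θ | MaxPt E z θ ∧ θ 0 ≠ b1} := fun h => h.2 hθt0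
  rw [hsplit, Set.ncard_insert_of_notMem hnm hfin, hRcard]
end
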